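/- arXiv:2202.02423 — 5 statements merged into one kernel-verified Lean document; each statement's English description precedes it below -/
import Mathlib

section
/- Pointwise generalization bound under model averaging with convex losses: Suppose ℓ(·, z) : ℝ^d → ℝ is convex for every z ∈ Z. Fix datasets s_k = (z_{1,k}, ..., z_{n,k}) ∈ Z^n for k = 1, ..., K, and suppose each w_k ∈ ℝ^d is an empirical risk minimizer on its local dataset, i.e., Σ_{i=1}^n ℓ(w_k, z_{i,k}) ≤ Σ_{i=1}^n ℓ(w, z_{i,k}) for all w ∈ ℝ^d. Let ŵ = (1/K) Σ_{k=1}^K w_k and let s denote the combined dataset of all nK points. Then, assuming all population risks below are finite, L(ŵ) − (1/(nK)) Σ_{i,k} ℓ(ŵ, z_{i,k}) ≤ (1/K) Σ_{k=1}^K [ L(w_k) − (1/n) Σ_{i=1}^n ℓ(w_k, z_{i,k}) ]; that is, Δ_A(s) ≤ (1/K) Σ_{k=1}^K Δ_{A_k}(s_k). -/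
open MeasureTheory

/-- **Pointwise generalization bound under model averaging with convex losses**
(Theorem 4 of the paper).  If `ℓ(·, z)` is convex for every `z`, each `w_k ∈ ℝ^d` minimizes
the empirical risk on its local dataset `s_k = (z_{1,k}, …, z_{n,k})`, and
`ŵ = (1/K) ∑_k w_k`, then the generalization error of `ŵ` on the combined dataset of all
`nK` points is at most the average of the per-node generalization errors:
`Δ_A(s) ≤ (1/K) ∑_k Δ_{A_k}(s_k)`. -/
theorem model_averaging_convex_loss_generalization
    {Z : Type*} [MeasurableSpace Z] (π : Measure Z) [IsProbabilityMeasure π]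
    (d n K : ℕ) (hn : 0 < n) (hK : 0 < K)
    (ℓ : (Fin d → ℝ) → Z → ℝ)
    (hconv : ∀ z : Z, ConvexOn ℝ Set.univ (fun w => ℓ w z))
    (z : Fin K → Fin n → Z) (w : Fin K → Fin d → ℝ)
    -- each `w k` is an empirical risk minimizer on its local dataset
    (hERM : ∀ k : Fin K, ∀ w' : Fin d → ℝ,
      ∑ i : Fin n, ℓ (w k) (z k i) ≤ ∑ i : Fin n, ℓ w' (z k i))
    -- the population risks below are finite
    (hint_avg : Integrable (fun zz => ℓ ((K : ℝ)⁻¹ • ∑ k : Fin K, w k) zz) π)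
    (hint_node : ∀ k : Fin K, Integrable (fun zz => ℓ (w k) zz) π) :
    (∫ zz, ℓ ((K : ℝ)⁻¹ • ∑ k : Fin K, w k) zz ∂π)
        - (1 / (n * K) : ℝ) * ∑ k : Fin K, ∑ i : Fin n, ℓ ((K : ℝ)⁻¹ • ∑ k' : Fin K, w k') (z k i)
      ≤ (1 / K : ℝ) * ∑ k : Fin K,
          ((∫ zz, ℓ (w k) zz ∂π) - (1 / n : ℝ) * ∑ i : Fin n, ℓ (w k) (z k i)) := by
  have hK' : (0 : ℝ) < K := by exact_mod_cast hK
  have hn' : (0 : ℝ) < n := by exact_mod_cast hn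
  -- pointwise Jensen
  have hpt : ∀ zz : Z, ℓ ((K : ℝ)⁻¹ • ∑ k : Fin K, w k) zz
      ≤ ∑ k : Fin K, (K : ℝ)⁻¹ * ℓ (w k) zz := by
    intro zz
    have := (hconv zz).map_sum_le (t := Finset.univ) (w := fun _ : Fin K => (K : ℝ)⁻¹)
      (p := w) (fun i _ => by positivity)
      (by simp [Finset.sum_const, Finset.card_univ]; field_simp)
      (fun i _ => Set.mem_univ _)
    simpa [Finset.smul_sum, ← Finset.sum_smul] using this
  -- integral inequality
  have hint : (∫ zz, ℓ ((K : ℝ)⁻¹ • ∑ k : Fin K, w k) zz ∂π)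
      ≤ (K : ℝ)⁻¹ * ∑ k : Fin K, ∫ zz, ℓ (w k) zz ∂π := by
    have h1 : (∫ zz, ℓ ((K : ℝ)⁻¹ • ∑ k : Fin K, w k) zz ∂π)
        ≤ ∫ zz, ∑ k : Fin K, (K : ℝ)⁻¹ * ℓ (w k) zz ∂π := by
      refine integral_mono hint_avg ?_ hpt
      exact integrable_finset_sum _ fun k _ => (hint_node k).const_mul _
    calc (∫ zz, ℓ ((K : ℝ)⁻¹ • ∑ k : Fin K, w k) zz ∂π)
        ≤ ∫ zz, ∑ k : Fin K, (K : ℝ)⁻¹ * ℓ (w k) zz ∂π := h1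
      _ = (K : ℝ)⁻¹ * ∑ k : Fin K, ∫ zz, ℓ (w k) zz ∂π := by
          rw [integral_finset_sum _ fun k _ => (hint_node k).const_mul _]
          simp_rw [integral_const_mul, Finset.mul_sum]
  -- empirical term inequality
  have hemp : ∑ k : Fin K, ∑ i : Fin n, ℓ (w k) (z k i)
      ≤ ∑ k : Fin K, ∑ i : Fin n, ℓ ((K : ℝ)⁻¹ • ∑ k' : Fin K, w k') (z k i) :=
    Finset.sum_le_sum fun k _ => hERM k _
  have expand : (1 / K : ℝ) * ∑ k : Fin K,
      ((∫ zz, ℓ (w k) zz ∂π) - (1 / n : ℝ) * ∑ i : Fin n, ℓ (w k) (z k i))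
      = (K : ℝ)⁻¹ * ∑ k : Fin K, ∫ zz, ℓ (w k) zz ∂π
        - (1 / (n * K) : ℝ) * ∑ k : Fin K, ∑ i : Fin n, ℓ (w k) (z k i) := by
    rw [Finset.sum_sub_distrib, mul_sub, ← Finset.mul_sum]
    congr 1
    · rw [one_div]
    · ring
  rw [expand]
  have h2 : (1 / (n * K) : ℝ) * ∑ k : Fin K, ∑ i : Fin n, ℓ (w k) (z k i)
      ≤ (1 / (n * K) : ℝ) * ∑ k : Fin K, ∑ i : Fin n, ℓ ((K : ℝ)⁻¹ • ∑ k' : Fin K, w k') (z k i) :=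
    mul_le_mul_of_nonneg_left hemp (by positivity)
  linarith
end

section
/- Exact decomposition of expected generalization error for averaged models with Bregman loss: Let F : ℝ^d → ℝ be continuously differentiable and strictly convex, and take the loss ℓ(w, z) = D_F(w, z) where D_F(p, q) = F(p) − F(q) − ⟨∇F(q), p − q⟩ is the Bregman divergence. Let S_1, ..., S_K be independent datasets, each consisting of n i.i.d. samples from a probability measure π on ℝ^d, let W_k = A_k(S_k) ∈ ℝ^d for measurable algorithms A_k, and let A(S) = (1/K) Σ_{k=1}^K W_k on the combined dataset S of all nK points. Then, assuming all expectations involved are finite, E_{S∼π^{nK}}[Δ_A(S)] = (1/K²) Σ_{k=1}^K E_{S_k∼π^n}[Δ_{A_k}(S_k)]. -/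
/-!
With `h z = ⟪∇F z, z⟫ - F z` the Bregman loss reads `D_F(w, z) = F w + h z - ⟪∇F z, w⟫`.
In the generalization error of a model `w` the `F w` terms cancel and the `h` terms have mean
zero, so the expected generalization error of any algorithm `W` on `m` samples `Z_i ∼ π` is
`(1/m) ∑ᵢ E ⟪∇F Z_i - E ∇F, W⟫`. For the averaged model `(1/K) ∑ⱼ W_j` a sample point of the
`k`-th dataset is independent of every `W_j` with `j ≠ k`, and `∇F Z_i - E ∇F` is centred, so
only the `j = k` terms survive, each with a factor `1/K`; passing from the normalisation
`1/(nK)` to `1/n` contributes the second factor `1/K`.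
-/

open MeasureTheory ProbabilityTheory
open scoped RealInnerProductSpace

namespace MeasureTheory.MeasurePreserving

variable {α β G : Type*} [MeasurableSpace α] [MeasurableSpace β] [NormedAddCommGroup G]
  [NormedSpace ℝ G] {μ : Measure α} {ν : Measure β} {f : α → β}

theorem integral_comp_of_aestronglyMeasurable (hf : MeasurePreserving f μ ν) {g : β → G}
    (hg : AEStronglyMeasurable g ν) : ∫ x, g (f x) ∂μ = ∫ y, g y ∂ν := by
  rw [← hf.map_eq] at hg ⊢
  exact (integral_map hf.measurable.aemeasurable hg).symm

end MeasureTheory.MeasurePreserving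

section Independence

variable {ι Y E : Type*} [Fintype ι] [MeasurableSpace Y] {ν : Measure Y} [IsProbabilityMeasure ν]
  [NormedAddCommGroup E] [InnerProductSpace ℝ E] {Φ Ψ : Y → E}

theorem indepFun_eval_eval {k j : ι} (hkj : k ≠ j) :
    IndepFun (fun x : ι → Y => x k) (fun x => x j) (Measure.pi fun _ => ν) :=
  (iIndepFun_pi (X := fun _ => id) fun _ => aemeasurable_id).indepFun hkj

theorem integrable_inner_eval_eval {k j : ι} (hkj : k ≠ j) (hΦ : Integrable Φ ν)
    (hΨ : Integrable Ψ ν) :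
    Integrable (fun x : ι → Y => ⟪Φ (x k), Ψ (x j)⟫) (Measure.pi fun _ => ν) := by
  have hk := measurePreserving_eval (fun _ : ι => ν) k
  have hj := measurePreserving_eval (fun _ : ι => ν) j
  borelize E
  have hΦk : AEMeasurable Φ ((Measure.pi fun _ => ν).map fun x : ι → Y => x k) := by
    rw [hk.map_eq]; exact hΦ.1.aemeasurable
  have hΨj : AEMeasurable Ψ ((Measure.pi fun _ => ν).map fun x : ι → Y => x j) := by
    rw [hj.map_eq]; exact hΨ.1.aemeasurable
  exact ((indepFun_eval_eval hkj).comp₀ hk.measurable.aemeasurable hj.measurable.aemeasurable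
    hΦk hΨj).integrable_bilin
    (hk.integrable_comp_of_integrable hΦ) (hj.integrable_comp_of_integrable hΨ) (innerSL ℝ)

theorem integral_inner_eval_eval [CompleteSpace E] {k j : ι} (hkj : k ≠ j)
    (hΦ : Integrable Φ ν) (hΨ : Integrable Ψ ν) :
    ∫ x : ι → Y, ⟪Φ (x k), Ψ (x j)⟫ ∂(Measure.pi fun _ => ν) = ⟪∫ y, Φ y ∂ν, ∫ y, Ψ y ∂ν⟫ := by
  have hk := measurePreserving_eval (fun _ : ι => ν) k
  have hj := measurePreserving_eval (fun _ : ι => ν) j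
  have := (indepFun_eval_eval hkj).integral_bilin_comp_comp hk.measurable.aemeasurable
    hj.measurable.aemeasurable (hk.map_eq.symm ▸ hΦ) (hj.map_eq.symm ▸ hΨ) (innerSL ℝ)
  rwa [hk.integral_comp_of_aestronglyMeasurable hΦ.1,
    hj.integral_comp_of_aestronglyMeasurable hΨ.1] at this

variable {A : ι → Y → E}

theorem integrable_inner_eval_apply_eval (k j : ι) (hΦ : Integrable Φ ν)
    (hA : ∀ j, Integrable (A j) ν) (hΦA : Integrable (fun y => ⟪Φ y, A k y⟫) ν) :
    Integrable (fun x : ι → Y => ⟪Φ (x k), A j (x j)⟫) (Measure.pi fun _ => ν) := by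
  rcases eq_or_ne k j with rfl | hkj
  · exact (measurePreserving_eval (fun _ => ν) k).integrable_comp_of_integrable hΦA
  · exact integrable_inner_eval_eval hkj hΦ (hA j)

theorem integrable_inner_sum_eval (k : ι) (hΦ : Integrable Φ ν)
    (hA : ∀ j, Integrable (A j) ν) (hΦA : Integrable (fun y => ⟪Φ y, A k y⟫) ν) :
    Integrable (fun x : ι → Y => ⟪Φ (x k), ∑ j, A j (x j)⟫) (Measure.pi fun _ => ν) := by
  simp_rw [inner_sum]
  exact integrable_finsetSum _ fun j _ => integrable_inner_eval_apply_eval k j hΦ hA hΦA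

theorem integral_inner_sum_eval_of_integral_eq_zero [CompleteSpace E] (k : ι)
    (hΦ : Integrable Φ ν) (hΦ₀ : ∫ y, Φ y ∂ν = 0) (hA : ∀ j, Integrable (A j) ν)
    (hΦA : Integrable (fun y => ⟪Φ y, A k y⟫) ν) :
    ∫ x : ι → Y, ⟪Φ (x k), ∑ j, A j (x j)⟫ ∂(Measure.pi fun _ => ν) = ∫ y, ⟪Φ y, A k y⟫ ∂ν := by
  simp_rw [inner_sum]
  rw [integral_finsetSum _ fun j _ => integrable_inner_eval_apply_eval k j hΦ hA hΦA,
    Finset.sum_eq_single k]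
  · exact (measurePreserving_eval (fun _ => ν) k).integral_comp_of_aestronglyMeasurable hΦA.1
  · intro j _ hjk
    rw [integral_inner_eval_eval hjk.symm hΦ (hA j), hΦ₀, inner_zero_left]
  · exact fun hk => absurd (Finset.mem_univ k) hk

end Independence

noncomputable def generalizationError {E X ι : Type*} [MeasurableSpace X] [Fintype ι]
    (ℓ : E → X → ℝ) (π : Measure X) (w : E) (s : ι → X) : ℝ :=
  ∫ z, ℓ w z ∂π - (1 / Fintype.card ι : ℝ) * ∑ i, ℓ w (s i)

/- `bregmanForm`: losses `F w + h z - ⟪G z, w⟫`, the shape of the Bregman divergence with `G = ∇F`. -/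
section BregmanForm

variable {E X ι : Type*} [NormedAddCommGroup E] [InnerProductSpace ℝ E]
  [MeasurableSpace X] [Fintype ι] {π : Measure X}
  {ℓ : E → X → ℝ} {F : E → ℝ} {h : X → ℝ} {G : X → E}

theorem integral_bregmanForm [CompleteSpace E] [IsProbabilityMeasure π]
    (hℓ : ∀ w z, ℓ w z = F w + h z - ⟪G z, w⟫) (hh : Integrable h π) (hG : Integrable G π)
    (w : E) :
    ∫ z, ℓ w z ∂π = F w + ∫ z, h z ∂π - ⟪∫ z, G z ∂π, w⟫ := by
  have hFh : Integrable (fun z => F w + h z) π := (integrable_const _).add hh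
  have hGw : ∫ z, ⟪G z, w⟫ ∂π = ⟪∫ z, G z ∂π, w⟫ := by
    simpa only [real_inner_comm w] using integral_inner hG w
  simp_rw [hℓ]
  rw [integral_sub hFh (hG.inner_const w), integral_add (integrable_const _) hh,
    integral_const, probReal_univ, one_smul, hGw]

theorem generalizationError_bregmanForm [CompleteSpace E] [IsProbabilityMeasure π] [Nonempty ι]
    (hℓ : ∀ w z, ℓ w z = F w + h z - ⟪G z, w⟫) (hh : Integrable h π) (hG : Integrable G π)
    (w : E) (s : ι → X) :
    generalizationError ℓ π w s =
      (∫ z, h z ∂π - (1 / Fintype.card ι : ℝ) * ∑ i, h (s i)) +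
        (1 / Fintype.card ι : ℝ) * ∑ i, ⟪G (s i) - ∫ z, G z ∂π, w⟫ := by
  have hcard : (Fintype.card ι : ℝ) ≠ 0 := Nat.cast_ne_zero.mpr Fintype.card_ne_zero
  rw [generalizationError, integral_bregmanForm hℓ hh hG]
  simp only [hℓ, inner_sub_left, Finset.sum_add_distrib, Finset.sum_sub_distrib,
    Finset.sum_const, Finset.card_univ, nsmul_eq_mul]
  field_simp
  ring

variable {Ω : Type*} [MeasurableSpace Ω] {μ : Measure Ω}

theorem integrable_of_integrable_prod_bregmanForm [SFinite μ] [NeZero μ] [IsFiniteMeasure π]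
    (hℓ : ∀ w z, ℓ w z = F w + h z - ⟪G z, w⟫) (hG : Integrable G π) {W : Ω → E}
    (hℓW : Integrable (fun p : Ω × X => ℓ (W p.1) p.2) (μ.prod π)) : Integrable h π := by
  obtain ⟨ω, hω⟩ := hℓW.prod_right_ae.exists
  refine ((hω.sub (integrable_const (F (W ω)))).add (hG.inner_const (W ω))).congr
    (.of_forall fun z => ?_)
  simp only [hℓ, Pi.add_apply, Pi.sub_apply]
  ring

theorem integrable_inner_sub_integral_of_bregmanForm
    (hℓ : ∀ w z, ℓ w z = F w + h z - ⟪G z, w⟫) (hh : Integrable h π) {W : Ω → E} {Z : Ω → X}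
    (hZ : MeasurePreserving Z μ π) (hFW : Integrable (fun ω => F (W ω)) μ)
    (hℓW : Integrable (fun ω => ℓ (W ω) (Z ω)) μ) (hW : Integrable W μ) :
    Integrable (fun ω => ⟪G (Z ω) - ∫ z, G z ∂π, W ω⟫) μ := by
  refine (((hFW.add (hZ.integrable_comp_of_integrable hh)).sub hℓW).sub
    (hW.const_inner (∫ z, G z ∂π))).congr (.of_forall fun ω => ?_)
  simp only [hℓ, inner_sub_left, Pi.add_apply, Pi.sub_apply, Function.comp_apply]
  ring

theorem integral_generalizationError_bregmanForm [CompleteSpace E] [IsProbabilityMeasure π]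
    [IsProbabilityMeasure μ] [Nonempty ι]
    (hℓ : ∀ w z, ℓ w z = F w + h z - ⟪G z, w⟫) (hh : Integrable h π) (hG : Integrable G π)
    {W : Ω → E} {Z : ι → Ω → X} (hZ : ∀ i, MeasurePreserving (Z i) μ π)
    (hW : ∀ i, Integrable (fun ω => ⟪G (Z i ω) - ∫ z, G z ∂π, W ω⟫) μ) :
    ∫ ω, generalizationError ℓ π (W ω) (fun i => Z i ω) ∂μ =
      (1 / Fintype.card ι : ℝ) * ∑ i, ∫ ω, ⟪G (Z i ω) - ∫ z, G z ∂π, W ω⟫ ∂μ := by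
  have hhZ : ∀ i, Integrable (fun ω => h (Z i ω)) μ := fun i =>
    (hZ i).integrable_comp_of_integrable hh
  have hmean : Integrable (fun ω => (1 / Fintype.card ι : ℝ) * ∑ i, h (Z i ω)) μ :=
    (integrable_finsetSum _ fun i _ => hhZ i).const_mul _
  have hcentredInt : Integrable
      (fun ω => ∫ z, h z ∂π - (1 / Fintype.card ι : ℝ) * ∑ i, h (Z i ω)) μ :=
    (integrable_const _).sub hmean
  have hcentred : ∫ ω, (∫ z, h z ∂π - (1 / Fintype.card ι : ℝ) * ∑ i, h (Z i ω)) ∂μ = 0 := by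
    have hcard : (Fintype.card ι : ℝ) ≠ 0 := Nat.cast_ne_zero.mpr Fintype.card_ne_zero
    rw [integral_sub (integrable_const _) hmean, integral_const, probReal_univ, one_smul,
      integral_const_mul, integral_finsetSum _ fun i _ => hhZ i]
    simp only [(hZ _).integral_comp_of_aestronglyMeasurable hh.1, Finset.sum_const,
      Finset.card_univ, nsmul_eq_mul]
    field_simp
    ring
  simp_rw [generalizationError_bregmanForm hℓ hh hG]
  rw [integral_add hcentredInt ((integrable_finsetSum _ fun i _ => hW i).const_mul _), hcentred,
    zero_add, integral_const_mul, integral_finsetSum _ fun i _ => hW i]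

theorem integral_generalizationError_average_bregmanForm {κ : Type*} [Fintype κ]
    [CompleteSpace E] [IsProbabilityMeasure π] [Nonempty ι] [Nonempty κ]
    (hℓ : ∀ w z, ℓ w z = F w + h z - ⟪G z, w⟫) (hh : Integrable h π) (hG : Integrable G π)
    {A : ι → (κ → X) → E} (hA : ∀ k, Integrable (A k) (Measure.pi fun _ => π))
    (hGA : ∀ k i, Integrable (fun y : κ → X => ⟪G (y i) - ∫ z, G z ∂π, A k y⟫)
      (Measure.pi fun _ => π)) :
    ∫ s : ι → κ → X, generalizationError ℓ π ((Fintype.card ι : ℝ)⁻¹ • ∑ k, A k (s k))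
        (fun p : ι × κ => s p.1 p.2) ∂(Measure.pi fun _ => Measure.pi fun _ => π) =
      (1 / Fintype.card ι ^ 2 : ℝ) *
        ∑ k, ∫ y, generalizationError ℓ π (A k y) y ∂(Measure.pi fun _ => π) := by
  set g := ∫ z, G z ∂π with hg
  have hZ : ∀ i : κ, MeasurePreserving (fun y : κ → X => y i) (Measure.pi fun _ => π) π :=
    measurePreserving_eval _
  have hGi : ∀ i, Integrable (fun y : κ → X => G (y i)) (Measure.pi fun _ => π) := fun i =>
    (hZ i).integrable_comp_of_integrable hG
  have hGg : ∀ i, Integrable (fun y : κ → X => G (y i) - g) (Measure.pi fun _ => π) := fun i =>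
    (hGi i).sub (integrable_const g)
  have hGg₀ : ∀ i, ∫ y : κ → X, G (y i) - g ∂(Measure.pi fun _ => π) = 0 := fun i => by
    rw [integral_sub (hGi i) (integrable_const g),
      (hZ i).integral_comp_of_aestronglyMeasurable hG.1, integral_const, probReal_univ,
      one_smul, sub_self]
  have hcrossInt : ∀ k i, Integrable (fun s : ι → κ → X =>
      ⟪G (s k i) - g, (Fintype.card ι : ℝ)⁻¹ • ∑ j, A j (s j)⟫)
      (Measure.pi fun _ => Measure.pi fun _ => π) := fun k i => by
    simp_rw [real_inner_smul_right]
    exact (integrable_inner_sum_eval k (hGg i) hA (hGA k i)).const_mul _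
  have hcross : ∀ k i, ∫ s : ι → κ → X, ⟪G (s k i) - g, (Fintype.card ι : ℝ)⁻¹ • ∑ j, A j (s j)⟫
      ∂(Measure.pi fun _ => Measure.pi fun _ => π) =
      (Fintype.card ι : ℝ)⁻¹ * ∫ y, ⟪G (y i) - g, A k y⟫ ∂(Measure.pi fun _ => π) :=
    fun k i => by
      simp_rw [real_inner_smul_right]
      rw [integral_const_mul,
        integral_inner_sum_eval_of_integral_eq_zero k (hGg i) (hGg₀ i) hA (hGA k i)]
  have hZZ : ∀ p : ι × κ, MeasurePreserving (fun s : ι → κ → X => s p.1 p.2)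
      (Measure.pi fun _ => Measure.pi fun _ => π) π := fun p =>
    (hZ p.2).comp (measurePreserving_eval _ p.1)
  rw [integral_generalizationError_bregmanForm hℓ hh hG hZZ fun p => hcrossInt p.1 p.2]
  simp only [integral_generalizationError_bregmanForm hℓ hh hG hZ (hGA _), ← hg,
    Fintype.sum_prod_type, hcross, Fintype.card_prod, Nat.cast_mul, Finset.mul_sum]
  refine Finset.sum_congr rfl fun k _ => Finset.sum_congr rfl fun i _ => ?_
  ring

end BregmanForm

theorem bregman_aggregation_exact_decomposition_general
    (d n K : ℕ) (hn : 0 < n) (hK : 0 < K)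
    (π : Measure (EuclideanSpace ℝ (Fin d))) [IsProbabilityMeasure π]
    (F : EuclideanSpace ℝ (Fin d) → ℝ)
    (ℓ : EuclideanSpace ℝ (Fin d) → EuclideanSpace ℝ (Fin d) → ℝ)
    (hℓ : ℓ = fun p q => F p - F q - ⟪gradient F q, p - q⟫)
    (A : Fin K → (Fin n → EuclideanSpace ℝ (Fin d)) → EuclideanSpace ℝ (Fin d))
    (Agg : (Fin K → Fin n → EuclideanSpace ℝ (Fin d)) → EuclideanSpace ℝ (Fin d))
    (hAgg : Agg = fun s => (K : ℝ)⁻¹ • ∑ k : Fin K, A k (s k))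
    -- all expectations involved are finite:
    (hint_pop : Integrable (fun p : (Fin K → Fin n → EuclideanSpace ℝ (Fin d)) ×
        EuclideanSpace ℝ (Fin d) => ℓ (Agg p.1) p.2)
      ((Measure.pi fun _ : Fin K => (Measure.pi fun _ : Fin n => π)).prod π))
    (hint_emp_node : ∀ (k : Fin K) (i : Fin n),
      Integrable (fun sk : Fin n → EuclideanSpace ℝ (Fin d) => ℓ (A k sk) (sk i))
        (Measure.pi fun _ : Fin n => π))
    (hint_F_node : ∀ k : Fin K,
      Integrable (fun sk : Fin n → EuclideanSpace ℝ (Fin d) => F (A k sk))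
        (Measure.pi fun _ : Fin n => π))
    (hint_A : ∀ k : Fin K, Integrable (A k) (Measure.pi fun _ : Fin n => π))
    (hint_grad : Integrable (fun z => gradient F z) π) :
    ∫ s, ((∫ z, ℓ (Agg s) z ∂π)
          - (1 / (n * K) : ℝ) * ∑ k : Fin K, ∑ i : Fin n, ℓ (Agg s) (s k i))
        ∂(Measure.pi fun _ : Fin K => (Measure.pi fun _ : Fin n => π))
      = (1 / (K ^ 2) : ℝ) * ∑ k : Fin K,
          ∫ sk, ((∫ z, ℓ (A k sk) z ∂π) - (1 / n : ℝ) * ∑ i : Fin n, ℓ (A k sk) (sk i))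
            ∂(Measure.pi fun _ : Fin n => π) := by
  have hbregman : ∀ w z, ℓ w z = F w + (⟪gradient F z, z⟫ - F z) - ⟪gradient F z, w⟫ :=
    fun w z => by simp only [hℓ, inner_sub_right]; ring
  have hh := integrable_of_integrable_prod_bregmanForm hbregman hint_grad hint_pop
  have : Nonempty (Fin n) := ⟨⟨0, hn⟩⟩
  have : Nonempty (Fin K) := ⟨⟨0, hK⟩⟩
  have key := integral_generalizationError_average_bregmanForm hbregman hh hint_grad hint_A
    fun k i => integrable_inner_sub_integral_of_bregmanForm hbregman hh
      (measurePreserving_eval _ i) (hint_F_node k) (hint_emp_node k i) (hint_A k)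
  subst hAgg
  simpa only [generalizationError, Fintype.card_prod, Fintype.card_fin, Fintype.sum_prod_type,
    Nat.cast_mul, mul_comm (K : ℝ)] using key

/-- **Exact decomposition of the expected generalization error for averaged models with a
Bregman-divergence loss** (Theorem 5(ii) of the paper, equality part).
With `ℓ(w, z) = D_F(w, z) = F(w) − F(z) − ⟪∇F(z), w − z⟫` for `F` continuously differentiable
and strictly convex, `S_1, …, S_K` independent datasets of `n` i.i.d. samples from `π`,
`W_k = A_k(S_k)` and `A(S) = (1/K) ∑_k W_k`, we have
`E_{S∼π^{nK}}[Δ_A(S)] = (1/K²) ∑_k E_{S_k∼π^n}[Δ_{A_k}(S_k)]`. -/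
theorem bregman_aggregation_exact_decomposition
    (d n K : ℕ) (hn : 0 < n) (hK : 0 < K)
    (π : Measure (EuclideanSpace ℝ (Fin d))) [IsProbabilityMeasure π]
    (F : EuclideanSpace ℝ (Fin d) → ℝ)
    (hF : ContDiff ℝ 1 F) (hFconv : StrictConvexOn ℝ Set.univ F)
    (ℓ : EuclideanSpace ℝ (Fin d) → EuclideanSpace ℝ (Fin d) → ℝ)
    (hℓ : ℓ = fun p q => F p - F q - ⟪gradient F q, p - q⟫)
    (A : Fin K → (Fin n → EuclideanSpace ℝ (Fin d)) → EuclideanSpace ℝ (Fin d))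
    (hA : ∀ k, Measurable (A k))
    (Agg : (Fin K → Fin n → EuclideanSpace ℝ (Fin d)) → EuclideanSpace ℝ (Fin d))
    (hAgg : Agg = fun s => (K : ℝ)⁻¹ • ∑ k : Fin K, A k (s k))
    -- all expectations involved are finite:
    (hint_pop : Integrable (fun p : (Fin K → Fin n → EuclideanSpace ℝ (Fin d)) ×
        EuclideanSpace ℝ (Fin d) => ℓ (Agg p.1) p.2)
      ((Measure.pi fun _ : Fin K => (Measure.pi fun _ : Fin n => π)).prod π))
    (hint_emp : ∀ (k : Fin K) (i : Fin n),
      Integrable (fun s : Fin K → Fin n → EuclideanSpace ℝ (Fin d) => ℓ (Agg s) (s k i))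
        (Measure.pi fun _ : Fin K => (Measure.pi fun _ : Fin n => π)))
    (hint_pop_node : ∀ k : Fin K,
      Integrable (fun p : (Fin n → EuclideanSpace ℝ (Fin d)) × EuclideanSpace ℝ (Fin d) =>
          ℓ (A k p.1) p.2)
        ((Measure.pi fun _ : Fin n => π).prod π))
    (hint_emp_node : ∀ (k : Fin K) (i : Fin n),
      Integrable (fun sk : Fin n → EuclideanSpace ℝ (Fin d) => ℓ (A k sk) (sk i))
        (Measure.pi fun _ : Fin n => π))
    (hint_F : Integrable (fun s : Fin K → Fin n → EuclideanSpace ℝ (Fin d) => F (Agg s))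
      (Measure.pi fun _ : Fin K => (Measure.pi fun _ : Fin n => π)))
    (hint_F_node : ∀ k : Fin K,
      Integrable (fun sk : Fin n → EuclideanSpace ℝ (Fin d) => F (A k sk))
        (Measure.pi fun _ : Fin n => π))
    (hint_A : ∀ k : Fin K, Integrable (A k) (Measure.pi fun _ : Fin n => π))
    (hint_grad : Integrable (fun z => gradient F z) π) :
    ∫ s, ((∫ z, ℓ (Agg s) z ∂π)
          - (1 / (n * K) : ℝ) * ∑ k : Fin K, ∑ i : Fin n, ℓ (Agg s) (s k i))
        ∂(Measure.pi fun _ : Fin K => (Measure.pi fun _ : Fin n => π))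
      = (1 / (K ^ 2) : ℝ) * ∑ k : Fin K,
          ∫ sk, ((∫ z, ℓ (A k sk) z ∂π) - (1 / n : ℝ) * ∑ i : Fin n, ℓ (A k sk) (sk i))
            ∂(Measure.pi fun _ : Fin n => π) :=
  bregman_aggregation_exact_decomposition_general d n K hn hK π F ℓ hℓ A Agg hAgg hint_pop
    hint_emp_node hint_F_node hint_A hint_grad
end

section
/- Aggregating per-sample mutual information bounds into per-dataset bounds: Let b ∈ (0, ∞], let ψ : [0, b) → ℝ be convex with ψ(0) = ψ'(0) = 0, and define ψ*^{-1}(y) = inf_{λ∈(0,b)} (y + ψ(λ))/λ. Let S_k = (Z_{1,k}, ..., Z_{n,k}) consist of independent random variables for each k = 1, ..., K, and let W_k be a random variable (e.g., W_k = A_k(S_k)). Then (1/(nK²)) Σ_{i=1}^n Σ_{k=1}^K ψ*^{-1}(I(W_k; Z_{i,k})) ≤ (1/K²) Σ_{k=1}^K ψ*^{-1}(I(W_k; S_k)/n). -/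
open MeasureTheory ProbabilityTheory
open scoped ENNReal Classical

/-- Kullback–Leibler divergence `KL(μ ‖ ν)` (equal to `∞` when `μ` is not absolutely
continuous w.r.t. `ν` or when the log-likelihood ratio is not integrable). -/
noncomputable def klDiv {α : Type*} [MeasurableSpace α] (μ ν : Measure α) : ℝ≥0∞ :=
  if μ ≪ ν ∧ Integrable (llr μ ν) μ then ENNReal.ofReal (∫ x, llr μ ν x ∂μ) else ∞

/-- Mutual information `I(X;Y)`: the KL divergence of the joint distribution of `(X, Y)`
from the product of the marginal distributions. -/
noncomputable def mutualInfo {Ω α β : Type*} [MeasurableSpace Ω] [MeasurableSpace α]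
    [MeasurableSpace β] (P : Measure Ω) (X : Ω → α) (Y : Ω → β) : ℝ≥0∞ :=
  klDiv (P.map fun ω => (X ω, Y ω)) ((P.map X).prod (P.map Y))

/-- `ψ*⁻¹(y) = inf_{λ ∈ (0,b)} (y + ψ(λ))/λ` for `b ∈ (0, ∞]`, as an
extended-real-valued function. -/
noncomputable def psiInv (b : ℝ≥0∞) (ψ : ℝ → ℝ) (y : ℝ≥0∞) : ℝ≥0∞ :=
  ⨅ lam : {l : ℝ // 0 < l ∧ ENNReal.ofReal l < b},
    (y + ENNReal.ofReal (ψ lam)) / ENNReal.ofReal lam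

/-!
Independence of the samples makes the law of `S_k` the product of the laws of the `Z_{i,k}`,
and then per-sample mutual informations are superadditive: `∑ᵢ I(W; Zᵢ) ≤ I(W; S)`.
Indeed, if `fᵢ` is the density of the law of `(W, Zᵢ)` with respect to `P_W ⊗ P_{Zᵢ}`, each
`fᵢ(w, ·)` integrates to one because the first marginal is `P_W`, so `∏ᵢ fᵢ(w, sᵢ)` is a
probability density with respect to `P_W ⊗ ∏ᵢ P_{Zᵢ}`, and Gibbs' inequality bounds
`∑ᵢ I(W; Zᵢ) = ∫ log ∏ᵢ fᵢ` by `I(W; S)`. The bound on `ψ*⁻¹` then follows from its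
monotonicity and from `∑ᵢ ψ*⁻¹(yᵢ) ≤ n ψ*⁻¹(∑ᵢ yᵢ / n)`, which holds for each `λ` before
taking the infimum.
-/

open Real

section KullbackLeibler

variable {X : Type*} [MeasurableSpace X]

lemma klDiv_eq_informationTheory_klDiv (μ ν : Measure X) [IsProbabilityMeasure μ]
    [IsProbabilityMeasure ν] : klDiv μ ν = InformationTheory.klDiv μ ν := by
  by_cases h : μ ≪ ν ∧ Integrable (llr μ ν) μ
  · rw [klDiv, if_pos h, InformationTheory.klDiv_of_ac_of_integrable h.1 h.2]
    simp
  · rw [klDiv, if_neg h, eq_comm, InformationTheory.klDiv_eq_top_iff]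
    exact fun hμν hint => h ⟨hμν, hint⟩

lemma klDiv_ne_top_iff {μ ν : Measure X} :
    klDiv μ ν ≠ ∞ ↔ μ ≪ ν ∧ Integrable (llr μ ν) μ := by
  unfold klDiv
  split_ifs with h <;> simp [h]

lemma klDiv_of_ac_of_integrable {μ ν : Measure X} (hμν : μ ≪ ν)
    (hint : Integrable (llr μ ν) μ) :
    klDiv μ ν = ENNReal.ofReal (∫ x, llr μ ν x ∂μ) := by
  rw [klDiv, if_pos ⟨hμν, hint⟩]

lemma klDiv_map_le {Y : Type*} [MeasurableSpace Y] {f : X → Y} (hf : Measurable f)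
    (μ ν : Measure X) [IsProbabilityMeasure μ] [IsProbabilityMeasure ν] :
    klDiv (μ.map f) (ν.map f) ≤ klDiv μ ν := by
  have := Measure.isProbabilityMeasure_map (μ := μ) hf.aemeasurable
  have := Measure.isProbabilityMeasure_map (μ := ν) hf.aemeasurable
  simp only [klDiv_eq_informationTheory_klDiv]
  exact InformationTheory.klDiv_map_le μ ν hf

lemma integral_nonneg_of_lintegral_exp_neg_le_one {μ : Measure X} [IsProbabilityMeasure μ]
    {h : X → ℝ} (hh : Integrable h μ) (hexp : ∫⁻ x, ENNReal.ofReal (exp (-h x)) ∂μ ≤ 1) :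
    0 ≤ ∫ x, h x ∂μ := by
  have hexp_int : Integrable (fun x => exp (-h x)) μ := by
    refine ⟨continuous_exp.comp_aestronglyMeasurable hh.1.neg, ?_⟩
    rw [hasFiniteIntegral_iff_ofReal (Filter.Eventually.of_forall fun x => (exp_pos _).le)]
    exact hexp.trans_lt ENNReal.one_lt_top
  have hjensen : exp (∫ x, -h x ∂μ) ≤ ∫ x, exp (-h x) ∂μ :=
    convexOn_exp.map_integral_le continuous_exp.continuousOn isClosed_univ
      (Filter.Eventually.of_forall fun _ => Set.mem_univ _) hh.neg hexp_int
  have hle_one : ∫ x, exp (-h x) ∂μ ≤ 1 := by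
    rw [integral_eq_lintegral_of_nonneg_ae (Filter.Eventually.of_forall fun x => (exp_pos _).le)
      hexp_int.1]
    exact ENNReal.toReal_le_of_le_ofReal zero_le_one (by simpa using hexp)
  have := hjensen.trans hle_one
  rw [integral_neg, ← exp_zero, exp_le_exp] at this
  linarith

lemma integral_log_le_integral_llr {μ ν : Measure X} [IsProbabilityMeasure μ]
    [SigmaFinite ν] (hμν : μ ≪ ν) (hllr : Integrable (llr μ ν) μ) {F : X → ℝ≥0∞}
    (hF : Measurable F) (hF_pos : ∀ᵐ x ∂μ, 0 < F x ∧ F x < ∞)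
    (hlogF : Integrable (fun x => log (F x).toReal) μ) (hF_le : ∫⁻ x, F x ∂ν ≤ 1) :
    ∫ x, log (F x).toReal ∂μ ≤ ∫ x, llr μ ν x ∂μ := by
  have hexp : ∀ᵐ x ∂μ, ENNReal.ofReal (exp (-(llr μ ν x - log (F x).toReal)))
      = ν.rnDeriv μ x * F x := by
    filter_upwards [exp_neg_llr hμν, Measure.rnDeriv_lt_top ν μ, hF_pos] with x hx hν hFx
    rw [neg_sub, sub_eq_add_neg, exp_add, hx,
      exp_log (ENNReal.toReal_pos hFx.1.ne' hFx.2.ne), ← ENNReal.toReal_mul,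
      ENNReal.ofReal_toReal (ENNReal.mul_ne_top hFx.2.ne hν.ne), mul_comm]
  have hle : ∫⁻ x, ν.rnDeriv μ x * F x ∂μ ≤ ∫⁻ x, F x ∂ν :=
    calc ∫⁻ x, ν.rnDeriv μ x * F x ∂μ = ∫⁻ x, F x ∂(μ.withDensity (ν.rnDeriv μ)) :=
          (lintegral_withDensity_eq_lintegral_mul _ (Measure.measurable_rnDeriv ν μ) hF).symm
      _ ≤ ∫⁻ x, F x ∂ν := lintegral_mono' (Measure.withDensity_rnDeriv_le ν μ) le_rfl
  have := integral_nonneg_of_lintegral_exp_neg_le_one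
    (h := fun x => llr μ ν x - log (F x).toReal) (hllr.sub hlogF)
    ((lintegral_congr_ae hexp).trans_le (hle.trans hF_le))
  rw [integral_sub hllr hlogF] at this
  linarith

end KullbackLeibler

theorem lintegral_fin_nat_prod_eq_prod {n : ℕ} {E : Fin n → Type*}
    [∀ i, MeasurableSpace (E i)] {μ : (i : Fin n) → Measure (E i)} [∀ i, SigmaFinite (μ i)]
    {f : (i : Fin n) → E i → ℝ≥0∞} (hf : ∀ i, Measurable (f i)) :
    ∫⁻ x, ∏ i, f i (x i) ∂(Measure.pi μ) = ∏ i, ∫⁻ x, f i x ∂(μ i) := by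
  induction n with
  | zero => simp
  | succ n ih =>
      calc
        _ = ∫⁻ y : E 0 × ((j : Fin n) → E (Fin.succAbove 0 j)),
            f 0 y.1 * ∏ j, f (Fin.succAbove 0 j) (y.2 j)
            ∂((μ 0).prod (Measure.pi fun j => μ (Fin.succAbove 0 j))) := by
          rw [← ((measurePreserving_piFinSuccAbove μ 0).symm).lintegral_comp_emb
            (MeasurableEquiv.measurableEmbedding _)]
          congr with y
          simp only [Fin.prod_univ_succAbove _ 0, MeasurableEquiv.piFinSuccAbove_symm_apply,
            Fin.insertNthEquiv, Equiv.coe_fn_mk, Fin.insertNth_apply_same,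
            Fin.insertNth_apply_succAbove]
        _ = (∫⁻ x, f 0 x ∂μ 0) * ∏ j, ∫⁻ x, f (Fin.succAbove 0 j) x ∂(μ (Fin.succAbove 0 j)) := by
          rw [← ih (fun j => hf _), ← lintegral_prod_mul (hf 0).aemeasurable]
          exact (Finset.measurable_prod _ fun j _ =>
            (hf _).comp (measurable_pi_apply j)).aemeasurable
        _ = ∏ i, ∫⁻ x, f i x ∂(μ i) :=
          (Fin.prod_univ_succAbove (fun i => ∫⁻ x, f i x ∂(μ i)) 0).symm

theorem lintegral_fintype_prod_eq_prod {ι : Type*} [Fintype ι] {E : ι → Type*}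
    [∀ i, MeasurableSpace (E i)] {μ : (i : ι) → Measure (E i)} [∀ i, SigmaFinite (μ i)]
    {f : (i : ι) → E i → ℝ≥0∞} (hf : ∀ i, Measurable (f i)) :
    ∫⁻ x, ∏ i, f i (x i) ∂(Measure.pi μ) = ∏ i, ∫⁻ x, f i x ∂(μ i) := by
  let e := (Fintype.equivFin ι).symm
  rw [← (measurePreserving_piCongrLeft _ e).lintegral_comp_emb
    (MeasurableEquiv.measurableEmbedding _)]
  simp_rw [← e.prod_comp, MeasurableEquiv.coe_piCongrLeft, Equiv.piCongrLeft_apply_apply]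
  exact lintegral_fin_nat_prod_eq_prod fun i => hf (e i)

section ConditionalDensity

variable {B Y : Type*} [MeasurableSpace B] [MeasurableSpace Y]

lemma map_fst_withDensity_prod (νB : Measure B) (ν : Measure Y) [SFinite νB] [SFinite ν]
    {f : B × Y → ℝ≥0∞} (hf : Measurable f) :
    ((νB.prod ν).withDensity f).map Prod.fst = νB.withDensity fun w => ∫⁻ y, f (w, y) ∂ν := by
  ext s hs
  rw [Measure.map_apply measurable_fst hs, withDensity_apply _ (measurable_fst hs),
    withDensity_apply _ hs, ← Set.prod_univ, ← Measure.restrict_prod_eq_prod_univ,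
    lintegral_prod _ hf.aemeasurable]

lemma ae_lintegral_rnDeriv_prod_eq_one {νB : Measure B} {ν : Measure Y} [SigmaFinite νB]
    [SigmaFinite ν] {ρ : Measure (B × Y)} [SigmaFinite ρ] (hρ : ρ ≪ νB.prod ν)
    (hfst : ρ.map Prod.fst = νB) :
    ∀ᵐ w ∂νB, ∫⁻ y, ρ.rnDeriv (νB.prod ν) (w, y) ∂ν = 1 := by
  have hf := Measure.measurable_rnDeriv ρ (νB.prod ν)
  refine (withDensity_eq_iff_of_sigmaFinite hf.lintegral_prod_right'.aemeasurable
    aemeasurable_const).mp ?_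
  rw [← map_fst_withDensity_prod νB ν hf, Measure.withDensity_rnDeriv_eq _ _ hρ, hfst,
    withDensity_const, one_smul]

end ConditionalDensity

section Superadditivity

variable {B ι : Type*} [Fintype ι] {A : ι → Type*} [MeasurableSpace B]
  [∀ i, MeasurableSpace (A i)]

lemma map_prodMap_eval_prod_pi (νB : Measure B) [IsProbabilityMeasure νB]
    (ν : ∀ i, Measure (A i)) [∀ i, IsProbabilityMeasure (ν i)] (i : ι) :
    (νB.prod (Measure.pi ν)).map (Prod.map id (Function.eval i)) = νB.prod (ν i) := by
  rw [← Measure.map_prod_map _ _ measurable_id (measurable_pi_apply i), Measure.map_id,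
    (measurePreserving_eval ν i).map_eq]

lemma lintegral_prod_pi_prod_eq_one (νB : Measure B) [IsProbabilityMeasure νB]
    (ν : ∀ i, Measure (A i)) [∀ i, SigmaFinite (ν i)]
    {f : ∀ i, B × A i → ℝ≥0∞} (hf : ∀ i, Measurable (f i))
    (hf_one : ∀ i, ∀ᵐ w ∂νB, ∫⁻ a, f i (w, a) ∂ν i = 1) :
    ∫⁻ p, ∏ i, f i (p.1, p.2 i) ∂(νB.prod (Measure.pi ν)) = 1 := by
  have hmeas : Measurable fun p : B × ∀ i, A i => ∏ i, f i (p.1, p.2 i) :=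
    Finset.measurable_prod _ fun i _ => (hf i).comp (measurable_id.prodMap (measurable_pi_apply i))
  rw [lintegral_prod _ hmeas.aemeasurable]
  have hinner : ∀ᵐ w ∂νB, ∫⁻ x, ∏ i, f i (w, x i) ∂(Measure.pi ν) = 1 := by
    filter_upwards [ae_all_iff.mpr hf_one] with w hw
    rw [lintegral_fintype_prod_eq_prod (f := fun i a => f i (w, a))
      fun i => (hf i).comp measurable_prodMk_left]
    exact Finset.prod_eq_one fun i _ => hw i
  rw [lintegral_congr_ae hinner, lintegral_one, measure_univ]

lemma sum_integral_llr_map_le_integral_llr {μ : Measure (B × ∀ i, A i)}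
    [IsProbabilityMeasure μ] {νB : Measure B} [IsProbabilityMeasure νB]
    {ν : ∀ i, Measure (A i)} [∀ i, IsProbabilityMeasure (ν i)] (hfst : μ.map Prod.fst = νB)
    (hac : μ ≪ νB.prod (Measure.pi ν)) (hint : Integrable (llr μ (νB.prod (Measure.pi ν))) μ)
    (hac_i : ∀ i, μ.map (Prod.map id (Function.eval i)) ≪ νB.prod (ν i))
    (hint_i : ∀ i, Integrable (llr (μ.map (Prod.map id (Function.eval i))) (νB.prod (ν i)))
      (μ.map (Prod.map id (Function.eval i)))) :
    ∑ i, ∫ q, llr (μ.map (Prod.map id (Function.eval i))) (νB.prod (ν i)) q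
        ∂(μ.map (Prod.map id (Function.eval i)))
      ≤ ∫ p, llr μ (νB.prod (Measure.pi ν)) p ∂μ := by
  set proj : ∀ i, B × (∀ i, A i) → B × A i := fun i => Prod.map id (Function.eval i)
  have hproj (i : ι) : Measurable (proj i) := measurable_id.prodMap (measurable_pi_apply i)
  have (i : ι) : IsProbabilityMeasure (μ.map (proj i)) :=
    Measure.isProbabilityMeasure_map (hproj i).aemeasurable
  set f : ∀ i, B × A i → ℝ≥0∞ := fun i => (μ.map (proj i)).rnDeriv (νB.prod (ν i))
  have hf (i : ι) : Measurable (f i) := Measure.measurable_rnDeriv _ _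
  have hF_le : ∫⁻ p, ∏ i, f i (proj i p) ∂(νB.prod (Measure.pi ν)) ≤ 1 := by
    refine (lintegral_prod_pi_prod_eq_one νB ν hf fun i => ?_).le
    refine ae_lintegral_rnDeriv_prod_eq_one (hac_i i) ?_
    rw [Measure.map_map measurable_fst (hproj i)]
    exact hfst
  have hF_pos : ∀ᵐ p ∂μ, ∀ i, 0 < f i (proj i p) ∧ f i (proj i p) < ∞ := by
    refine ae_all_iff.mpr fun i => ?_
    have h := (Measure.rnDeriv_pos (hac_i i)).and
      ((hac_i i).ae_le (Measure.rnDeriv_lt_top (μ.map (proj i)) (νB.prod (ν i))))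
    exact ae_of_ae_map (hproj i).aemeasurable h
  have hlog : (fun p => log (∏ i, f i (proj i p)).toReal)
      =ᵐ[μ] fun p => ∑ i, llr (μ.map (proj i)) (νB.prod (ν i)) (proj i p) := by
    filter_upwards [hF_pos] with p hp
    rw [ENNReal.toReal_prod, log_prod fun i _ =>
      (ENNReal.toReal_pos (hp i).1.ne' (hp i).2.ne).ne']
    rfl
  have hint_comp (i : ι) :
      Integrable (fun p => llr (μ.map (proj i)) (νB.prod (ν i)) (proj i p)) μ :=
    (integrable_map_measure (stronglyMeasurable_llr _ _).aestronglyMeasurable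
      (hproj i).aemeasurable).mp (hint_i i)
  have hgibbs := integral_log_le_integral_llr (F := fun p => ∏ i, f i (proj i p)) hac hint
    (Finset.measurable_prod _ fun i _ => (hf i).comp (hproj i))
    (hF_pos.mono fun p hp =>
      ⟨pos_iff_ne_zero.mpr (Finset.prod_ne_zero_iff.mpr fun i _ => (hp i).1.ne'),
        ENNReal.prod_lt_top fun i _ => (hp i).2⟩)
    ((integrable_finsetSum _ fun i _ => hint_comp i).congr hlog.symm) hF_le
  rw [integral_congr_ae hlog, integral_finsetSum _ fun i _ => hint_comp i] at hgibbs
  refine le_of_eq_of_le (Finset.sum_congr rfl fun i _ => ?_) hgibbs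
  exact integral_map (hproj i).aemeasurable (stronglyMeasurable_llr _ _).aestronglyMeasurable

theorem sum_klDiv_map_le_klDiv_prod_pi {μ : Measure (B × ∀ i, A i)} [IsProbabilityMeasure μ]
    {νB : Measure B} [IsProbabilityMeasure νB] {ν : ∀ i, Measure (A i)}
    [∀ i, IsProbabilityMeasure (ν i)] (hfst : μ.map Prod.fst = νB) :
    ∑ i, klDiv (μ.map (Prod.map id (Function.eval i))) (νB.prod (ν i))
      ≤ klDiv μ (νB.prod (Measure.pi ν)) := by
  have hproj (i : ι) : Measurable (Prod.map id (Function.eval i) : B × (∀ i, A i) → B × A i) :=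
    measurable_id.prodMap (measurable_pi_apply i)
  have (i : ι) : IsProbabilityMeasure (μ.map (Prod.map id (Function.eval i))) :=
    Measure.isProbabilityMeasure_map (hproj i).aemeasurable
  by_cases htop : klDiv μ (νB.prod (Measure.pi ν)) = ∞
  · exact htop ▸ le_top
  obtain ⟨hac, hint⟩ := klDiv_ne_top_iff.mp htop
  have hmarg (i : ι) : klDiv (μ.map (Prod.map id (Function.eval i))) (νB.prod (ν i)) ≠ ∞ := by
    refine ne_top_of_le_ne_top htop ?_
    rw [← map_prodMap_eval_prod_pi νB ν i]
    exact klDiv_map_le (hproj i) _ _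
  choose hac_i hint_i using fun i => klDiv_ne_top_iff.mp (hmarg i)
  have hnonneg (i : ι) : 0 ≤ ∫ q, llr (μ.map (Prod.map id (Function.eval i))) (νB.prod (ν i)) q
      ∂(μ.map (Prod.map id (Function.eval i))) := by
    have := InformationTheory.integral_llr_add_sub_measure_univ_nonneg (hac_i i) (hint_i i)
    simpa [measureReal_def] using this
  simp_rw [klDiv_of_ac_of_integrable hac hint, klDiv_of_ac_of_integrable (hac_i _) (hint_i _)]
  rw [← ENNReal.ofReal_sum_of_nonneg fun i _ => hnonneg i]
  exact ENNReal.ofReal_le_ofReal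
    (sum_integral_llr_map_le_integral_llr hfst hac hint hac_i hint_i)

end Superadditivity

theorem sum_mutualInfo_le_mutualInfo_pi {Ω B ι : Type*} [Fintype ι] {A : ι → Type*}
    [MeasurableSpace Ω] [MeasurableSpace B] [∀ i, MeasurableSpace (A i)]
    (P : Measure Ω) [IsProbabilityMeasure P] {W : Ω → B} (hW : Measurable W)
    {Z : ∀ i, Ω → A i} (hZ : ∀ i, Measurable (Z i)) (hindep : iIndepFun Z P) :
    ∑ i, mutualInfo P W (Z i) ≤ mutualInfo P W fun ω i => Z i ω := by
  have hWS : Measurable fun ω => (W ω, fun i => Z i ω) := hW.prodMk (measurable_pi_lambda _ hZ)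
  have := Measure.isProbabilityMeasure_map (μ := P) hWS.aemeasurable
  have := Measure.isProbabilityMeasure_map (μ := P) hW.aemeasurable
  have (i : ι) := Measure.isProbabilityMeasure_map (μ := P) (hZ i).aemeasurable
  have hmarg (i : ι) : (P.map fun ω => (W ω, fun i => Z i ω)).map (Prod.map id (Function.eval i))
      = P.map fun ω => (W ω, Z i ω) :=
    Measure.map_map (measurable_id.prodMap (measurable_pi_apply i)) hWS
  have hfst : (P.map fun ω => (W ω, fun i => Z i ω)).map Prod.fst = P.map W :=
    Measure.map_map measurable_fst hWS
  unfold mutualInfo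
  rw [hindep.map_fun_eq_pi_map fun i => (hZ i).aemeasurable]
  simpa only [hmarg] using sum_klDiv_map_le_klDiv_prod_pi hfst

section PsiInv

variable {b : ℝ≥0∞} {ψ : ℝ → ℝ}

lemma psiInv_mono {y y' : ℝ≥0∞} (h : y ≤ y') : psiInv b ψ y ≤ psiInv b ψ y' :=
  iInf_mono fun _ => by gcongr

lemma sum_psiInv_le_card_mul_psiInv {ι : Type*} [Fintype ι] (y : ι → ℝ≥0∞) :
    ∑ i, psiInv b ψ (y i) ≤ Fintype.card ι * psiInv b ψ ((∑ i, y i) / Fintype.card ι) := by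
  rcases isEmpty_or_nonempty ι with _ | _
  · simp
  have hn0 : (Fintype.card ι : ℝ≥0∞) ≠ 0 := by simp
  have hntop : (Fintype.card ι : ℝ≥0∞) ≠ ∞ := ENNReal.natCast_ne_top _
  rw [psiInv, ENNReal.mul_iInf_of_ne hn0 hntop]
  refine le_iInf fun lam => ?_
  calc ∑ i, psiInv b ψ (y i)
      ≤ ∑ i, (y i + ENNReal.ofReal (ψ lam)) / ENNReal.ofReal lam :=
        Finset.sum_le_sum fun i _ => iInf_le (fun l : {l : ℝ // 0 < l ∧ ENNReal.ofReal l < b} =>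
          (y i + ENNReal.ofReal (ψ l)) / ENNReal.ofReal l) lam
    _ = ((∑ i, y i) + Fintype.card ι * ENNReal.ofReal (ψ lam)) / ENNReal.ofReal lam := by
        simp only [div_eq_mul_inv, ← Finset.sum_mul, Finset.sum_add_distrib, Finset.sum_const,
          Finset.card_univ, nsmul_eq_mul]
    _ = Fintype.card ι * (((∑ i, y i) / Fintype.card ι + ENNReal.ofReal (ψ lam))
          / ENNReal.ofReal lam) := by
        rw [← mul_div_assoc, mul_add, ENNReal.mul_div_cancel hn0 hntop]

end PsiInv

theorem per_sample_to_per_dataset_psiInv_bound_general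
    {Ω α β : Type*} [MeasurableSpace Ω] [MeasurableSpace α] [MeasurableSpace β]
    (P : Measure Ω) [IsProbabilityMeasure P]
    (n K : ℕ) (hn : 0 < n)
    (b : ℝ≥0∞) (ψ : ℝ → ℝ)
    (Z : Fin K → Fin n → Ω → α) (hZmeas : ∀ k i, Measurable (Z k i))
    -- within each dataset `S_k`, the samples `Z_{1,k}, …, Z_{n,k}` are independent
    (hZindep : ∀ k, iIndepFun (Z k) P)
    (W : Fin K → Ω → β) (hW : ∀ k, Measurable (W k)) :
    ((n : ℝ≥0∞) * (K : ℝ≥0∞) ^ 2)⁻¹ * ∑ i : Fin n, ∑ k : Fin K,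
        psiInv b ψ (mutualInfo P (W k) (Z k i))
      ≤ ((K : ℝ≥0∞) ^ 2)⁻¹ * ∑ k : Fin K,
          psiInv b ψ (mutualInfo P (W k) (fun ω => fun i => Z k i ω) / (n : ℝ≥0∞)) := by
  have hn0 : (n : ℝ≥0∞) ≠ 0 := by exact_mod_cast hn.ne'
  have hntop : (n : ℝ≥0∞) ≠ ∞ := ENNReal.natCast_ne_top n
  have hdataset (k : Fin K) : ∑ i, psiInv b ψ (mutualInfo P (W k) (Z k i))
      ≤ n * psiInv b ψ (mutualInfo P (W k) (fun ω i => Z k i ω) / n) := by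
    have hsum := sum_psiInv_le_card_mul_psiInv (b := b) (ψ := ψ)
      fun i => mutualInfo P (W k) (Z k i)
    rw [Fintype.card_fin] at hsum
    refine hsum.trans (mul_le_mul_right (psiInv_mono (ENNReal.div_le_div_right ?_ _)) _)
    exact sum_mutualInfo_le_mutualInfo_pi P (hW k) (hZmeas k) (hZindep k)
  calc ((n : ℝ≥0∞) * (K : ℝ≥0∞) ^ 2)⁻¹ * ∑ i, ∑ k, psiInv b ψ (mutualInfo P (W k) (Z k i))
      = ((K : ℝ≥0∞) ^ 2)⁻¹ *
          ((n : ℝ≥0∞)⁻¹ * ∑ k, ∑ i, psiInv b ψ (mutualInfo P (W k) (Z k i))) := by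
        rw [Finset.sum_comm, ENNReal.mul_inv (Or.inr (by simp)) (Or.inl hntop),
          mul_comm (n : ℝ≥0∞)⁻¹, mul_assoc]
    _ ≤ ((K : ℝ≥0∞) ^ 2)⁻¹ * ((n : ℝ≥0∞)⁻¹ * ∑ k,
          n * psiInv b ψ (mutualInfo P (W k) (fun ω i => Z k i ω) / n)) := by
        gcongr with k
        exact hdataset k
    _ = _ := by
        rw [← Finset.mul_sum, ← mul_assoc (n : ℝ≥0∞)⁻¹, ENNReal.inv_mul_cancel hn0 hntop, one_mul]

/-- **Aggregating per-sample mutual-information bounds into per-dataset bounds.**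
For `b ∈ (0, ∞]`, `ψ : [0, b) → ℝ` convex with `ψ(0) = ψ'(0) = 0`, datasets
`S_k = (Z_{1,k}, …, Z_{n,k})` of independent random variables and arbitrary random
variables `W_k`,
`(1/(nK²)) ∑_i ∑_k ψ*⁻¹(I(W_k; Z_{i,k})) ≤ (1/K²) ∑_k ψ*⁻¹(I(W_k; S_k)/n)`. -/
theorem per_sample_to_per_dataset_psiInv_bound
    {Ω α β : Type*} [MeasurableSpace Ω] [MeasurableSpace α] [MeasurableSpace β]
    (P : Measure Ω) [IsProbabilityMeasure P]
    (n K : ℕ) (hn : 0 < n) (hK : 0 < K)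
    (b : ℝ≥0∞) (hb : 0 < b) (ψ : ℝ → ℝ)
    (hψconv : ConvexOn ℝ {x : ℝ | 0 ≤ x ∧ ENNReal.ofReal x < b} ψ)
    (hψ0 : ψ 0 = 0)
    (hψ'0 : HasDerivWithinAt ψ 0 (Set.Ici 0) 0)
    (Z : Fin K → Fin n → Ω → α) (hZmeas : ∀ k i, Measurable (Z k i))
    -- within each dataset `S_k`, the samples `Z_{1,k}, …, Z_{n,k}` are independent
    (hZindep : ∀ k, iIndepFun (Z k) P)
    (W : Fin K → Ω → β) (hW : ∀ k, Measurable (W k)) :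
    ((n : ℝ≥0∞) * (K : ℝ≥0∞) ^ 2)⁻¹ * ∑ i : Fin n, ∑ k : Fin K,
        psiInv b ψ (mutualInfo P (W k) (Z k i))
      ≤ ((K : ℝ≥0∞) ^ 2)⁻¹ * ∑ k : Fin K,
          psiInv b ψ (mutualInfo P (W k) (fun ω => fun i => Z k i ω) / (n : ℝ≥0∞)) :=
  per_sample_to_per_dataset_psiInv_bound_general P n K hn b ψ Z hZmeas hZindep W hW
end

section
/- Exact expected generalization error for Gaussian mean estimation by sample averaging: Let Z_1, ..., Z_m be i.i.d. d-dimensional Gaussian random vectors with distribution N(μ, σ²I_d) for σ > 0, let the loss be ℓ(w, z) = ‖w − z‖₂², and let the algorithm output the sample mean W = (1/m) Σ_{j=1}^m Z_j. Then the expected generalization error equals E[ L(W) − (1/m) Σ_{j=1}^m ℓ(W, Z_j) ] = 2σ²d/m. In particular, in the distributed setting with K nodes each averaging n local samples and the aggregate being the average of the node averages (equivalently the mean of all m = nK samples), the expected generalization error is 2σ²d/(nK). -/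
/-!
Only the first two moments of each coordinate matter. For a coordinate with mean `a` and
variance `v`, the population risk of `w` is `(w - a)² + v`, while the empirical risk of the
sample mean `x̄` of `N` samples is `N⁻¹ ∑ₚ (xₚ - a)² - (x̄ - a)²`. The gap is therefore
`2 (x̄ - a)² + v - N⁻¹ ∑ₚ (xₚ - a)²`, whose expectation is `2 v / N + v - v` because
independence gives `Var x̄ = v / N`. Summing over the `d` coordinates gives `2 σ² d / N`.
The average of the node averages is the sample mean of all `n K` pooled samples, and pooling
is a measure-preserving reindexing of the product measure.
-/

open MeasureTheory ProbabilityTheory Finset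
open scoped NNReal

namespace GaussianMeanEstimation

section SampleMean

variable {ι : Type*} [Fintype ι]

noncomputable def sampleMean {E : Type*} [AddCommMonoid E] [Module ℝ E] (s : ι → E) : E :=
  (Fintype.card ι : ℝ)⁻¹ • ∑ p, s p

lemma sampleMean_apply {κ : Type*} (s : ι → κ → ℝ) (j : κ) :
    sampleMean s j = sampleMean fun p => s p j := by
  simp only [sampleMean, Pi.smul_apply, Finset.sum_apply]

lemma sampleMean_uncurry {κ E : Type*} [Fintype κ] [AddCommMonoid E] [Module ℝ E]
    (s : ι → κ → E) :
    sampleMean (Function.uncurry s) = sampleMean fun k => sampleMean (s k) := by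
  simp only [sampleMean, Fintype.card_prod, Nat.cast_mul, mul_inv, mul_smul,
    Fintype.sum_prod_type, Function.uncurry_apply_pair, smul_sum]

lemma mean_sq_sampleMean_sub [Nonempty ι] (x : ι → ℝ) (a : ℝ) :
    (Fintype.card ι : ℝ)⁻¹ * ∑ p, (sampleMean x - x p) ^ 2
      = (Fintype.card ι : ℝ)⁻¹ * ∑ p, (x p - a) ^ 2 - (sampleMean x - a) ^ 2 := by
  have hN : (Fintype.card ι : ℝ) ≠ 0 := Nat.cast_ne_zero.mpr Fintype.card_ne_zero
  have hsum : ∑ p, x p = Fintype.card ι * sampleMean x := by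
    rw [sampleMean, smul_eq_mul, mul_inv_cancel_left₀ hN]
  have hexpand : ∀ p, (sampleMean x - x p) ^ 2
      = (x p - a) ^ 2 - 2 * (sampleMean x - a) * x p
        + (2 * (sampleMean x - a) * a + (sampleMean x - a) ^ 2) := fun p => by ring
  simp only [hexpand, sum_add_distrib, sum_sub_distrib, ← mul_sum, sum_const, card_univ,
    nsmul_eq_mul, hsum]
  field_simp
  ring

end SampleMean

lemma integral_sq_const_sub {Ω : Type*} [MeasurableSpace Ω] {μ : Measure Ω}
    [IsProbabilityMeasure μ] {X : Ω → ℝ} (hX : MemLp X 2 μ) (c : ℝ) :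
    ∫ ω, (c - X ω) ^ 2 ∂μ = (c - μ[X]) ^ 2 + Var[X; μ] := by
  have hexpand : ∀ ω, (c - X ω) ^ 2 = X ω ^ 2 - 2 * c * X ω + c ^ 2 := fun ω => by ring
  simp_rw [hexpand]
  have hlin : Integrable (fun ω => 2 * c * X ω) μ := (hX.integrable one_le_two).const_mul _
  have hquad : Integrable (fun ω => X ω ^ 2 - 2 * c * X ω) μ := hX.integrable_sq.sub hlin
  rw [integral_add hquad (integrable_const _),
    integral_sub hX.integrable_sq hlin, integral_const_mul, integral_const,
    variance_eq_sub hX]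
  simp only [Pi.pow_apply, probReal_univ, one_smul]
  ring

section Risk

variable {ι Z W : Type*} [Fintype ι] [MeasurableSpace Z]

noncomputable def populationRisk (ℓ : W → Z → ℝ) (P : Measure Z) (w : W) : ℝ :=
  ∫ z, ℓ w z ∂P

noncomputable def empiricalRisk (ℓ : W → Z → ℝ) (s : ι → Z) (w : W) : ℝ :=
  (Fintype.card ι : ℝ)⁻¹ * ∑ p, ℓ w (s p)

noncomputable def generalizationGap (ℓ : W → Z → ℝ) (P : Measure Z) (A : (ι → Z) → W)
    (s : ι → Z) : ℝ :=
  populationRisk ℓ P (A s) - empiricalRisk ℓ s (A s)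

end Risk

section IID

variable {ι T : Type*} [Fintype ι] [MeasurableSpace T]
  {ν : Measure T} [IsProbabilityMeasure ν] {f : T → ℝ}

lemma memLp_sampleMean_comp (hf : MemLp f 2 ν) :
    MemLp (fun s : ι → T => sampleMean fun p => f (s p)) 2 (Measure.pi fun _ => ν) := by
  simp only [sampleMean, smul_eq_mul]
  exact (memLp_finsetSum univ fun p _ =>
    hf.comp_measurePreserving (measurePreserving_eval _ p)).const_mul _

lemma integral_sampleMean_comp [Nonempty ι] (hf : Integrable f ν) :
    ∫ s : ι → T, sampleMean (fun p => f (s p)) ∂(Measure.pi fun _ => ν) = ν[f] := by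
  simp only [sampleMean, smul_eq_mul]
  rw [integral_const_mul, integral_finsetSum _ fun p _ => integrable_comp_eval hf]
  simp only [integral_comp_eval (μ := fun _ : ι => ν) hf.aestronglyMeasurable, sum_const,
    card_univ, nsmul_eq_mul]
  field_simp

lemma variance_sampleMean_comp [Nonempty ι] (hf : MemLp f 2 ν) :
    Var[fun s : ι → T => sampleMean fun p => f (s p); Measure.pi fun _ => ν]
      = Var[f; ν] / Fintype.card ι := by
  simp only [sampleMean, smul_eq_mul]
  rw [variance_const_mul, ← Finset.sum_fn, variance_sum_pi fun _ => hf, sum_const, card_univ,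
    nsmul_eq_mul]
  field_simp

lemma integral_sq_sampleMean_comp_sub [Nonempty ι] (hf : MemLp f 2 ν) :
    ∫ s : ι → T, (sampleMean (fun p => f (s p)) - ν[f]) ^ 2 ∂(Measure.pi fun _ => ν)
      = Var[f; ν] / Fintype.card ι := by
  rw [← variance_sampleMean_comp hf,
    variance_eq_integral (memLp_sampleMean_comp hf).aemeasurable,
    integral_sampleMean_comp (hf.integrable one_le_two)]

lemma generalizationGap_sampleMean_comp_eq [Nonempty ι] (hf : MemLp f 2 ν) (s : ι → T) :
    generalizationGap (fun w t => (w - f t) ^ 2) ν (fun s => sampleMean fun p => f (s p)) s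
      = 2 * (sampleMean (fun p => f (s p)) - ν[f]) ^ 2 + Var[f; ν]
        - (Fintype.card ι : ℝ)⁻¹ * ∑ p, (f (s p) - ν[f]) ^ 2 := by
  rw [generalizationGap, populationRisk, empiricalRisk, integral_sq_const_sub hf,
    mean_sq_sampleMean_sub _ ν[f]]
  ring

lemma integrable_sq_sampleMean_comp_sub (hf : MemLp f 2 ν) (c : ℝ) :
    Integrable (fun s : ι → T => (sampleMean (fun p => f (s p)) - c) ^ 2)
      (Measure.pi fun _ => ν) :=
  ((memLp_sampleMean_comp hf).sub (memLp_const c)).integrable_sq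

lemma integrable_sq_comp_eval_sub (hf : MemLp f 2 ν) (c : ℝ) (p : ι) :
    Integrable (fun s : ι → T => (f (s p) - c) ^ 2) (Measure.pi fun _ => ν) :=
  have hsq : Integrable (fun t => (f t - c) ^ 2) ν := (hf.sub (memLp_const c)).integrable_sq
  integrable_comp_eval (μ := fun _ : ι => ν) (i := p) hsq

lemma integral_sq_comp_eval_sub_integral (hf : MemLp f 2 ν) (p : ι) :
    ∫ s : ι → T, (f (s p) - ν[f]) ^ 2 ∂(Measure.pi fun _ => ν) = Var[f; ν] := by
  have hsq : Integrable (fun t => (f t - ν[f]) ^ 2) ν := (hf.sub (memLp_const _)).integrable_sq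
  rw [integral_comp_eval (μ := fun _ : ι => ν) (i := p) hsq.aestronglyMeasurable,
    variance_eq_integral hf.aemeasurable]

lemma integrable_generalizationGap_sampleMean_comp [Nonempty ι] (hf : MemLp f 2 ν) :
    Integrable (generalizationGap (fun w t => (w - f t) ^ 2) ν
      (fun s : ι → T => sampleMean fun p => f (s p))) (Measure.pi fun _ => ν) := by
  simp_rw [funext (generalizationGap_sampleMean_comp_eq hf)]
  exact (((integrable_sq_sampleMean_comp_sub hf _).const_mul 2).add (integrable_const _)).sub
    ((integrable_finsetSum _ fun p _ => integrable_sq_comp_eval_sub hf _ p).const_mul _)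

lemma integral_generalizationGap_sampleMean_comp [Nonempty ι] (hf : MemLp f 2 ν) :
    ∫ s : ι → T, generalizationGap (fun w t => (w - f t) ^ 2) ν
      (fun s => sampleMean fun p => f (s p)) s ∂(Measure.pi fun _ => ν)
      = 2 * Var[f; ν] / Fintype.card ι := by
  have hmean : Integrable (fun s : ι → T => 2 * (sampleMean (fun p => f (s p)) - ν[f]) ^ 2)
      (Measure.pi fun _ => ν) := (integrable_sq_sampleMean_comp_sub hf _).const_mul 2
  have hmean' : Integrable
      (fun s : ι → T => 2 * (sampleMean (fun p => f (s p)) - ν[f]) ^ 2 + Var[f; ν])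
      (Measure.pi fun _ => ν) := hmean.add (integrable_const _)
  have hsamples : Integrable
      (fun s : ι → T => (Fintype.card ι : ℝ)⁻¹ * ∑ p, (f (s p) - ν[f]) ^ 2)
      (Measure.pi fun _ => ν) :=
    (integrable_finsetSum _ fun p _ => integrable_sq_comp_eval_sub hf _ p).const_mul _
  simp_rw [generalizationGap_sampleMean_comp_eq hf]
  rw [integral_sub hmean' hsamples, integral_add hmean (integrable_const _),
    integral_const_mul, integral_const_mul,
    integral_finsetSum _ fun p _ => integrable_sq_comp_eval_sub hf _ p,
    integral_sq_sampleMean_comp_sub hf]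
  simp only [integral_sq_comp_eval_sub_integral hf, integral_const, probReal_univ, one_smul,
    sum_const, card_univ, nsmul_eq_mul]
  field_simp
  ring

end IID

section SquaredLoss

variable {ι κ : Type*} [Fintype ι] [Fintype κ] {P : Measure (κ → ℝ)}
  [IsProbabilityMeasure P]

def sqLoss (w z : κ → ℝ) : ℝ := ∑ j, (w j - z j) ^ 2

lemma generalizationGap_sqLoss_sampleMean (hP : ∀ j, MemLp (fun z : κ → ℝ => z j) 2 P)
    (s : ι → κ → ℝ) :
    generalizationGap sqLoss P sampleMean s
      = ∑ j, generalizationGap (fun w z => (w - z j) ^ 2) P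
          (fun s => sampleMean fun p => s p j) s := by
  have hloss : ∀ (w : κ → ℝ) j, Integrable (fun z : κ → ℝ => (w j - z j) ^ 2) P :=
    fun w j => ((memLp_const (w j)).sub (hP j)).integrable_sq
  simp only [generalizationGap, populationRisk, empiricalRisk, sqLoss]
  rw [integral_finsetSum _ fun j _ => hloss (sampleMean s) j, sum_comm, mul_sum,
    ← sum_sub_distrib]
  simp only [sampleMean_apply]

theorem integral_generalizationGap_sqLoss_sampleMean [Nonempty ι]
    (hP : ∀ j, MemLp (fun z : κ → ℝ => z j) 2 P) :
    ∫ s, generalizationGap sqLoss P sampleMean s ∂(Measure.pi fun _ : ι => P)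
      = 2 * (∑ j, Var[fun z => z j; P]) / Fintype.card ι := by
  simp_rw [generalizationGap_sqLoss_sampleMean hP]
  rw [integral_finsetSum _ fun j _ => integrable_generalizationGap_sampleMean_comp (hP j),
    mul_sum, sum_div]
  exact sum_congr rfl fun j _ => integral_generalizationGap_sampleMean_comp (hP j)

end SquaredLoss

lemma integral_comp_uncurry_pi {ι κ X : Type*} [Fintype ι] [Fintype κ] [MeasurableSpace X]
    (P : Measure X) [IsProbabilityMeasure P] (g : (ι × κ → X) → ℝ) :
    ∫ s, g (Function.uncurry s) ∂(Measure.pi fun _ : ι => Measure.pi fun _ : κ => P)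
      = ∫ t, g t ∂(Measure.pi fun _ : ι × κ => P) := by
  have h := Measure.infinitePi_map_curry_symm (X := X) fun (_ : ι) (_ : κ) => P
  simp only [Measure.infinitePi_eq_pi] at h
  exact MeasurePreserving.integral_comp' ⟨(MeasurableEquiv.curry ι κ X).symm.measurable, h⟩ g

lemma variance_eval_pi {ι : Type*} [Fintype ι] (μ : ι → Measure ℝ)
    [∀ i, IsProbabilityMeasure (μ i)] (i : ι) :
    Var[fun z : ι → ℝ => z i; Measure.pi μ] = Var[id; μ i] :=
  (measurePreserving_eval μ i).variance_fun_comp measurable_id.aemeasurable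

end GaussianMeanEstimation

open GaussianMeanEstimation in
theorem gaussian_mean_estimation_exact_generalization_error_general
    (d m n K : ℕ) (hm : 0 < m) (hn : 0 < n) (hK : 0 < K)
    (μ0 : Fin d → ℝ) (σ : ℝ≥0) :
    -- centralized: the sample mean of `m` i.i.d. samples
    (∫ s : Fin m → Fin d → ℝ,
        ((∫ z, ∑ j : Fin d, (((m : ℝ)⁻¹ • ∑ p : Fin m, s p) j - z j) ^ 2
            ∂(Measure.pi fun j : Fin d => gaussianReal (μ0 j) (σ ^ 2)))
          - (1 / m : ℝ) * ∑ p : Fin m, ∑ j : Fin d,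
              (((m : ℝ)⁻¹ • ∑ p' : Fin m, s p') j - s p j) ^ 2)
        ∂(Measure.pi fun _ : Fin m =>
          (Measure.pi fun j : Fin d => gaussianReal (μ0 j) (σ ^ 2)))
      = 2 * (σ : ℝ) ^ 2 * d / m)
    ∧
    -- distributed: `K` nodes each average `n` local samples, and the aggregate model is
    -- the average of the node averages
    (∫ s : Fin K → Fin n → Fin d → ℝ,
        ((∫ z, ∑ j : Fin d,
              (((K : ℝ)⁻¹ • ∑ k : Fin K, (n : ℝ)⁻¹ • ∑ i : Fin n, s k i) j - z j) ^ 2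
            ∂(Measure.pi fun j : Fin d => gaussianReal (μ0 j) (σ ^ 2)))
          - (1 / (n * K) : ℝ) * ∑ k : Fin K, ∑ i : Fin n, ∑ j : Fin d,
              (((K : ℝ)⁻¹ • ∑ k' : Fin K, (n : ℝ)⁻¹ • ∑ i' : Fin n, s k' i') j
                - s k i j) ^ 2)
        ∂(Measure.pi fun _ : Fin K => (Measure.pi fun _ : Fin n =>
          (Measure.pi fun j : Fin d => gaussianReal (μ0 j) (σ ^ 2))))
      = 2 * (σ : ℝ) ^ 2 * d / (n * K)) := by
  set P := Measure.pi fun j : Fin d => gaussianReal (μ0 j) (σ ^ 2)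
  have hP : ∀ j, MemLp (fun z : Fin d → ℝ => z j) 2 P := fun j =>
    (memLp_id_gaussianReal 2).comp_measurePreserving (measurePreserving_eval _ j)
  have hvar : ∑ j, Var[fun z : Fin d → ℝ => z j; P] = d * (σ : ℝ) ^ 2 := by
    simp [P, variance_eval_pi, variance_id_gaussianReal]
  have : Nonempty (Fin m) := ⟨⟨0, hm⟩⟩
  have : Nonempty (Fin n) := ⟨⟨0, hn⟩⟩
  have : Nonempty (Fin K) := ⟨⟨0, hK⟩⟩
  constructor
  · have h := integral_generalizationGap_sqLoss_sampleMean (ι := Fin m) hP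
    simp only [generalizationGap, populationRisk, empiricalRisk, sqLoss, sampleMean,
      Fintype.card_fin, hvar] at h
    rw [one_div, h]
    ring
  · have h := integral_generalizationGap_sqLoss_sampleMean (ι := Fin K × Fin n) hP
    rw [← integral_comp_uncurry_pi] at h
    simp only [generalizationGap, populationRisk, empiricalRisk, sqLoss, sampleMean_uncurry] at h
    simp only [sampleMean, Fintype.card_fin, Fintype.card_prod, Nat.cast_mul,
      Fintype.sum_prod_type, Function.uncurry_apply_pair, hvar] at h
    rw [one_div, mul_comm (n : ℝ), h]
    ring

/-- **Exact expected generalization error for Gaussian mean estimation by sample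
averaging.**  For `Z_1, …, Z_m` i.i.d. `N(μ, σ²I_d)` on `ℝ^d`, squared `ℓ²` loss
`ℓ(w, z) = ‖w − z‖₂² = ∑_j (w_j − z_j)²`, and the sample-mean algorithm
`W = (1/m) ∑_j Z_j`, the expected generalization error is exactly `2σ²d/m`.
In particular, in the distributed setting with `K` nodes each averaging `n` local samples
and the aggregate model being the average of the node averages, it is `2σ²d/(nK)`. -/
theorem gaussian_mean_estimation_exact_generalization_error
    (d m n K : ℕ) (hm : 0 < m) (hn : 0 < n) (hK : 0 < K)
    (μ0 : Fin d → ℝ) (σ : ℝ≥0) (hσ : 0 < σ) :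
    -- centralized: the sample mean of `m` i.i.d. samples
    (∫ s : Fin m → Fin d → ℝ,
        ((∫ z, ∑ j : Fin d, (((m : ℝ)⁻¹ • ∑ p : Fin m, s p) j - z j) ^ 2
            ∂(Measure.pi fun j : Fin d => gaussianReal (μ0 j) (σ ^ 2)))
          - (1 / m : ℝ) * ∑ p : Fin m, ∑ j : Fin d,
              (((m : ℝ)⁻¹ • ∑ p' : Fin m, s p') j - s p j) ^ 2)
        ∂(Measure.pi fun _ : Fin m =>
          (Measure.pi fun j : Fin d => gaussianReal (μ0 j) (σ ^ 2)))
      = 2 * (σ : ℝ) ^ 2 * d / m)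
    ∧
    -- distributed: `K` nodes each average `n` local samples, and the aggregate model is
    -- the average of the node averages
    (∫ s : Fin K → Fin n → Fin d → ℝ,
        ((∫ z, ∑ j : Fin d,
              (((K : ℝ)⁻¹ • ∑ k : Fin K, (n : ℝ)⁻¹ • ∑ i : Fin n, s k i) j - z j) ^ 2
            ∂(Measure.pi fun j : Fin d => gaussianReal (μ0 j) (σ ^ 2)))
          - (1 / (n * K) : ℝ) * ∑ k : Fin K, ∑ i : Fin n, ∑ j : Fin d,
              (((K : ℝ)⁻¹ • ∑ k' : Fin K, (n : ℝ)⁻¹ • ∑ i' : Fin n, s k' i') j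
                - s k i j) ^ 2)
        ∂(Measure.pi fun _ : Fin K => (Measure.pi fun _ : Fin n =>
          (Measure.pi fun j : Fin d => gaussianReal (μ0 j) (σ ^ 2))))
      = 2 * (σ : ℝ) ^ 2 * d / (n * K)) :=
  gaussian_mean_estimation_exact_generalization_error_general d m n K hm hn hK μ0 σ
end

section
/- End-to-end information-theoretic bound for the Gaussian mean estimation example: Let Z_{i,k}, for i = 1, ..., n and k = 1, ..., K, be i.i.d. d-dimensional Gaussian random vectors with distribution N(μ, σ²I_d) for σ > 0, let the loss be ℓ(w, z) = ‖w − z‖₂², and let Ŵ be the mean of all nK samples. Then the expected generalization error satisfies E[Δ_A(S)] ≤ σ²d·√(2(1 + 1/(nK))²·log(nK/(nK−1))). -/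
/-!
In each coordinate the population risk of the sample mean `x̄` of `m` i.i.d. samples `xₐ` with
mean `c` and variance `v` is `(x̄ - c)² + v`, while by Steiner's formula its empirical risk is
`m⁻¹ ∑ₐ (c - xₐ)² - (c - x̄)²`. As `E (c - x̄)² = v / m` and `E (c - xₐ)² = v`, the expected gap is
`2v / m`, so `2dσ² / m` over the `d` coordinates. This is below the stated bound because
`log (m / (m - 1)) ≥ 1 / m` and `(1 + 1 / m)² ≥ 4 / m`.
-/

open MeasureTheory ProbabilityTheory
open scoped NNReal

lemma integral_const_sub_sq {Ω : Type*} [MeasurableSpace Ω] {μ : Measure Ω}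
    [IsProbabilityMeasure μ] {X : Ω → ℝ} (hX : MemLp X 2 μ) (w : ℝ) :
    ∫ ω, (w - X ω) ^ 2 ∂μ = (w - μ[X]) ^ 2 + Var[X; μ] := by
  have hwX : MemLp (fun ω => w - X ω) 2 μ := (memLp_const w).sub hX
  rw [← variance_const_sub hX.aestronglyMeasurable w, variance_eq_sub hwX,
    integral_sub (integrable_const w) (hX.integrable one_le_two), integral_const]
  simp

section IidSum

variable {Ω ι : Type*} [MeasurableSpace Ω] [Fintype ι] {ν : Measure Ω}
  [IsProbabilityMeasure ν] {X : Ω → ℝ}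

lemma memLp_sum_comp_eval (hX : MemLp X 2 ν) :
    MemLp (fun s : ι → Ω => ∑ i, X (s i)) 2 (Measure.pi fun _ => ν) :=
  memLp_finsetSum _ fun i _ => hX.comp_measurePreserving (measurePreserving_eval _ i)

lemma integrable_sum_comp_eval (hX : Integrable X ν) :
    Integrable (fun s : ι → Ω => ∑ i, X (s i)) (Measure.pi fun _ => ν) :=
  integrable_finsetSum _ fun _ _ => integrable_comp_eval hX

lemma integral_sum_comp_eval (hX : Integrable X ν) :
    ∫ s, ∑ i, X (s i) ∂(Measure.pi fun _ : ι => ν) = Fintype.card ι * ν[X] := by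
  rw [integral_finsetSum _ fun _ _ => integrable_comp_eval hX]
  simp [integral_comp_eval (μ := fun _ => ν) hX.aestronglyMeasurable]

lemma variance_sum_comp_eval (hX : MemLp X 2 ν) :
    Var[fun s : ι → Ω => ∑ i, X (s i); Measure.pi fun _ => ν] = Fintype.card ι * Var[X; ν] := by
  have hpi := variance_sum_pi (μ := fun _ : ι => ν) (X := fun _ => X) fun _ => hX
  simp only [Finset.sum_const, Finset.card_univ, nsmul_eq_mul] at hpi
  rw [← hpi]
  congr 1
  ext s
  simp

end IidSum

section SampleMean

variable {Ω κ ι : Type*} [MeasurableSpace Ω] [Fintype κ] [Fintype ι]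

noncomputable def sampleMean (x : κ → ι → ℝ) : ℝ :=
  (Fintype.card κ * Fintype.card ι : ℝ)⁻¹ * ∑ k, ∑ i, x k i

/-- `(x̄ - c) ^ 2 + v` is the population risk of `x̄` for a law with mean `c` and variance `v`. -/
noncomputable def sampleMeanGap (c v : ℝ) (x : κ → ι → ℝ) : ℝ :=
  (sampleMean x - c) ^ 2 + v -
    (Fintype.card κ * Fintype.card ι : ℝ)⁻¹ * ∑ k, ∑ i, (sampleMean x - x k i) ^ 2

lemma sampleMeanGap_eq [Nonempty κ] [Nonempty ι] (c v : ℝ) (x : κ → ι → ℝ) :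
    sampleMeanGap c v x = 2 * (c - sampleMean x) ^ 2 + v -
      (Fintype.card κ * Fintype.card ι : ℝ)⁻¹ * ∑ k, ∑ i, (c - x k i) ^ 2 := by
  set m : ℝ := Fintype.card κ * Fintype.card ι
  have hm : m ≠ 0 := by positivity
  have hsum : ∑ k, ∑ i, x k i = m * sampleMean x := by
    rw [sampleMean, mul_inv_cancel_left₀ hm]
  have hexpand : ∀ k i, (sampleMean x - x k i) ^ 2
      = (c - x k i) ^ 2 - 2 * (c - sampleMean x) * (c - x k i) + (c - sampleMean x) ^ 2 := by
    intros; ring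
  simp only [sampleMeanGap, hexpand, Finset.sum_add_distrib, Finset.sum_sub_distrib,
    ← Finset.mul_sum, Finset.sum_const, Finset.card_univ, nsmul_eq_mul, hsum]
  field_simp
  ring

variable {ν : Measure Ω} [IsProbabilityMeasure ν] {X : Ω → ℝ}

lemma memLp_sampleMean (hX : MemLp X 2 ν) :
    MemLp (fun s : κ → ι → Ω => sampleMean fun k i => X (s k i)) 2
      (Measure.pi fun _ => Measure.pi fun _ => ν) :=
  (memLp_sum_comp_eval (memLp_sum_comp_eval hX)).const_mul _

lemma integral_sampleMean [Nonempty κ] [Nonempty ι] (hX : Integrable X ν) :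
    ∫ s, sampleMean (fun k i => X (s k i)) ∂(Measure.pi fun _ : κ => Measure.pi fun _ : ι => ν)
      = ν[X] := by
  simp only [sampleMean]
  rw [integral_const_mul, integral_sum_comp_eval (integrable_sum_comp_eval hX),
    integral_sum_comp_eval hX]
  field_simp

lemma variance_sampleMean (hX : MemLp X 2 ν) :
    Var[fun s : κ → ι → Ω => sampleMean fun k i => X (s k i);
      Measure.pi fun _ => Measure.pi fun _ => ν]
      = Var[X; ν] / (Fintype.card κ * Fintype.card ι) := by
  simp only [sampleMean]
  rw [variance_const_mul, variance_sum_comp_eval (memLp_sum_comp_eval hX),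
    variance_sum_comp_eval hX]
  field_simp

lemma integral_sq_sub_sampleMean [Nonempty κ] [Nonempty ι] (hX : MemLp X 2 ν) :
    ∫ s, (ν[X] - sampleMean fun k i => X (s k i)) ^ 2
      ∂(Measure.pi fun _ : κ => Measure.pi fun _ : ι => ν)
      = Var[X; ν] / (Fintype.card κ * Fintype.card ι) := by
  rw [integral_const_sub_sq (memLp_sampleMean hX), integral_sampleMean (hX.integrable one_le_two),
    variance_sampleMean hX, sub_self, sq, zero_mul, zero_add]

lemma integral_sum_sum_sq_sub (hX : MemLp X 2 ν) :
    ∫ s, ∑ k, ∑ i, (ν[X] - X (s k i)) ^ 2 ∂(Measure.pi fun _ : κ => Measure.pi fun _ : ι => ν)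
      = Fintype.card κ * Fintype.card ι * Var[X; ν] := by
  have hsq : Integrable (fun ω => (ν[X] - X ω) ^ 2) ν := ((memLp_const _).sub hX).integrable_sq
  rw [integral_sum_comp_eval (integrable_sum_comp_eval hsq), integral_sum_comp_eval hsq,
    integral_const_sub_sq hX, sub_self]
  ring

lemma integrable_sampleMeanGap [Nonempty κ] [Nonempty ι] (hX : MemLp X 2 ν) (c v : ℝ) :
    Integrable (fun s : κ → ι → Ω => sampleMeanGap c v fun k i => X (s k i))
      (Measure.pi fun _ => Measure.pi fun _ => ν) := by
  simp only [sampleMeanGap_eq]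
  have hsq : Integrable (fun ω => (c - X ω) ^ 2) ν := ((memLp_const _).sub hX).integrable_sq
  exact ((((memLp_const c).sub (memLp_sampleMean hX)).integrable_sq.const_mul 2).add
    (integrable_const v)).sub
    ((integrable_sum_comp_eval (integrable_sum_comp_eval hsq)).const_mul _)

lemma integral_sampleMeanGap [Nonempty κ] [Nonempty ι] (hX : MemLp X 2 ν) :
    ∫ s, sampleMeanGap ν[X] Var[X; ν] (fun k i => X (s k i))
      ∂(Measure.pi fun _ : κ => Measure.pi fun _ : ι => ν)
      = 2 * Var[X; ν] / (Fintype.card κ * Fintype.card ι) := by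
  have hsq : Integrable (fun ω => (ν[X] - X ω) ^ 2) ν := ((memLp_const _).sub hX).integrable_sq
  have hmean : Integrable (fun s : κ → ι → Ω => (ν[X] - sampleMean fun k i => X (s k i)) ^ 2)
      (Measure.pi fun _ => Measure.pi fun _ => ν) :=
    ((memLp_const _).sub (memLp_sampleMean hX)).integrable_sq
  simp only [sampleMeanGap_eq]
  rw [integral_sub ((hmean.const_mul 2).fun_add (integrable_const _))
      ((integrable_sum_comp_eval (integrable_sum_comp_eval hsq)).const_mul _),
    integral_add (hmean.const_mul 2) (integrable_const _), integral_const_mul, integral_const_mul,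
    integral_sq_sub_sampleMean hX, integral_sum_sum_sq_sub hX, integral_const]
  simp only [probReal_univ, smul_eq_mul, one_mul]
  field_simp
  ring

end SampleMean

lemma integral_sum_sub_sq_pi {δ : Type*} [Fintype δ] {ρ : δ → Measure ℝ}
    [∀ j, IsProbabilityMeasure (ρ j)] (hρ : ∀ j, MemLp id 2 (ρ j)) (w : δ → ℝ) :
    ∫ z, ∑ j, (w j - z j) ^ 2 ∂Measure.pi ρ = ∑ j, ((w j - ∫ t, t ∂ρ j) ^ 2 + Var[id; ρ j]) := by
  have hsq : ∀ j, Integrable (fun t => (w j - t) ^ 2) (ρ j) :=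
    fun j => ((memLp_const _).sub (hρ j)).integrable_sq
  rw [integral_finsetSum _ fun j _ => integrable_comp_eval (μ := ρ) (i := j) (hsq j)]
  refine Finset.sum_congr rfl fun j _ => ?_
  rw [integral_comp_eval (μ := ρ) (i := j) (hsq j).aestronglyMeasurable]
  exact integral_const_sub_sq (hρ j) (w j)

lemma risk_gap_eq_sum_sampleMeanGap {κ ι δ : Type*} [Fintype κ] [Fintype ι] [Fintype δ]
    {ρ : δ → Measure ℝ} [∀ j, IsProbabilityMeasure (ρ j)]
    (hρ : ∀ j, MemLp id 2 (ρ j)) (s : κ → ι → δ → ℝ) :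
    let M : ℝ := Fintype.card κ * Fintype.card ι
    (∫ z, ∑ j, ((M⁻¹ • ∑ k, ∑ i, s k i) j - z j) ^ 2 ∂Measure.pi ρ)
        - M⁻¹ * ∑ k, ∑ i, ∑ j, ((M⁻¹ • ∑ k', ∑ i', s k' i') j - s k i j) ^ 2
      = ∑ j, sampleMeanGap (∫ t, t ∂ρ j) Var[id; ρ j] (fun k i => s k i j) := by
  intro M
  have hmean : ∀ j, (M⁻¹ • ∑ k, ∑ i, s k i) j = sampleMean fun k i => s k i j := by
    intro j
    simp [sampleMean, M, Finset.sum_apply]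
  rw [integral_sum_sub_sq_pi hρ, Finset.sum_comm_cycle, Finset.mul_sum, ← Finset.sum_sub_distrib]
  simp only [hmean, sampleMeanGap, M]

lemma integral_sampleMeanGap_eval {κ ι δ : Type*} [Fintype κ] [Fintype ι] [Fintype δ]
    [Nonempty κ] [Nonempty ι] {ρ : δ → Measure ℝ} [∀ j, IsProbabilityMeasure (ρ j)] {j : δ}
    (hρ : MemLp id 2 (ρ j)) :
    ∫ s : κ → ι → δ → ℝ, sampleMeanGap (∫ t, t ∂ρ j) Var[id; ρ j] (fun k i => s k i j)
      ∂(Measure.pi fun _ => Measure.pi fun _ => Measure.pi ρ)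
      = 2 * Var[id; ρ j] / (Fintype.card κ * Fintype.card ι) := by
  have hmean : ∫ z, z j ∂Measure.pi ρ = ∫ t, t ∂ρ j := integral_eval
  have hvar : Var[fun z => z j; Measure.pi ρ] = Var[id; ρ j] :=
    (measurePreserving_eval ρ j).variance_fun_comp aemeasurable_id
  rw [← hmean, ← hvar]
  exact integral_sampleMeanGap (hρ.comp_measurePreserving (measurePreserving_eval ρ j))

lemma one_div_le_log_div_sub_one {m : ℝ} (hm : 1 < m) : 1 / m ≤ Real.log (m / (m - 1)) := by
  have hlog := Real.one_sub_inv_le_log_of_pos (x := m / (m - 1)) (by apply div_pos <;> linarith)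
  convert hlog using 1
  field_simp
  ring

lemma two_div_le_sqrt_two_mul_sq_mul_log {m : ℝ} (hm : 1 < m) :
    2 / m ≤ Real.sqrt (2 * (1 + 1 / m) ^ 2 * Real.log (m / (m - 1))) := by
  have hu : 0 < 1 / m := by positivity
  refine Real.le_sqrt_of_sq_le ?_
  calc (2 / m) ^ 2 = 4 * (1 / m) ^ 2 := by ring
    _ ≤ 2 * (1 + 1 / m) ^ 2 * (1 / m) := by
        nlinarith [mul_nonneg hu.le (sq_nonneg (1 - 1 / m)), sq_nonneg (1 / m)]
    _ ≤ _ := by gcongr; exact one_div_le_log_div_sub_one hm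

theorem gaussian_mean_estimation_end_to_end_bound_general
    (d n K : ℕ) (hnK : 2 ≤ n * K)
    (μ0 : Fin d → ℝ) (σ : ℝ≥0) :
    ∫ s : Fin K → Fin n → Fin d → ℝ,
        ((∫ z, ∑ j : Fin d,
              ((((n * K : ℕ) : ℝ)⁻¹ • ∑ k : Fin K, ∑ i : Fin n, s k i) j - z j) ^ 2
            ∂(Measure.pi fun j : Fin d => gaussianReal (μ0 j) (σ ^ 2)))
          - (1 / (n * K) : ℝ) * ∑ k : Fin K, ∑ i : Fin n, ∑ j : Fin d,
              ((((n * K : ℕ) : ℝ)⁻¹ • ∑ k' : Fin K, ∑ i' : Fin n, s k' i') j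
                - s k i j) ^ 2)
        ∂(Measure.pi fun _ : Fin K => (Measure.pi fun _ : Fin n =>
          (Measure.pi fun j : Fin d => gaussianReal (μ0 j) (σ ^ 2))))
      ≤ (σ : ℝ) ^ 2 * d *
        Real.sqrt (2 * (1 + 1 / (n * K : ℝ)) ^ 2 *
          Real.log ((n * K : ℝ) / ((n * K : ℝ) - 1))) := by
  have : Nonempty (Fin K) := ⟨⟨0, Nat.pos_of_ne_zero (by rintro rfl; simp at hnK)⟩⟩
  have : Nonempty (Fin n) := ⟨⟨0, Nat.pos_of_ne_zero (by rintro rfl; simp at hnK)⟩⟩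
  set ρ : Fin d → Measure ℝ := fun j => gaussianReal (μ0 j) (σ ^ 2)
  have hρ : ∀ j, MemLp id 2 (ρ j) := fun j => memLp_id_gaussianReal 2
  have hcoord : ∀ j, MemLp (fun z : Fin d → ℝ => z j) 2 (Measure.pi ρ) :=
    fun j => (hρ j).comp_measurePreserving (measurePreserving_eval ρ j)
  have hm : ((n * K : ℕ) : ℝ) = Fintype.card (Fin K) * Fintype.card (Fin n) := by
    simp [mul_comm]
  have hm' : (1 / (n * K) : ℝ) = (Fintype.card (Fin K) * Fintype.card (Fin n) : ℝ)⁻¹ := by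
    simp [mul_comm]
  calc _ = ∑ j, ∫ s : Fin K → Fin n → Fin d → ℝ,
          sampleMeanGap (∫ t, t ∂ρ j) Var[id; ρ j] (fun k i => s k i j)
          ∂(Measure.pi fun _ => Measure.pi fun _ => Measure.pi ρ) := by
        rw [← integral_finsetSum _ fun j _ => integrable_sampleMeanGap (hcoord j) _ _]
        refine integral_congr_ae (.of_forall fun s => ?_)
        simp only [hm, hm']
        exact risk_gap_eq_sum_sampleMeanGap hρ s
    _ = ∑ j : Fin d, 2 * (σ : ℝ) ^ 2 / (n * K) := by
        refine Finset.sum_congr rfl fun j _ => ?_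
        rw [integral_sampleMeanGap_eval (hρ j), variance_id_gaussianReal]
        simp [mul_comm]
    _ = (σ : ℝ) ^ 2 * d * (2 / (n * K)) := by
        simp only [Finset.sum_const, Finset.card_univ, Fintype.card_fin, nsmul_eq_mul]
        ring
    _ ≤ _ := by
        gcongr
        exact two_div_le_sqrt_two_mul_sq_mul_log (by exact_mod_cast hnK)

/-- **End-to-end information-theoretic bound for Gaussian mean estimation.**
For `Z_{i,k}`, `i = 1, …, n`, `k = 1, …, K`, i.i.d. `N(μ, σ²I_d)` on `ℝ^d`, squared `ℓ²`
loss `ℓ(w, z) = ‖w − z‖₂² = ∑_j (w_j − z_j)²`, and `Ŵ` the mean of all `nK` samples, the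
expected generalization error satisfies
`E[Δ_A(S)] ≤ σ²d·√(2(1 + 1/(nK))²·log(nK/(nK−1)))`. -/
theorem gaussian_mean_estimation_end_to_end_bound
    (d n K : ℕ) (hnK : 2 ≤ n * K)
    (μ0 : Fin d → ℝ) (σ : ℝ≥0) (hσ : 0 < σ) :
    ∫ s : Fin K → Fin n → Fin d → ℝ,
        ((∫ z, ∑ j : Fin d,
              ((((n * K : ℕ) : ℝ)⁻¹ • ∑ k : Fin K, ∑ i : Fin n, s k i) j - z j) ^ 2
            ∂(Measure.pi fun j : Fin d => gaussianReal (μ0 j) (σ ^ 2)))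
          - (1 / (n * K) : ℝ) * ∑ k : Fin K, ∑ i : Fin n, ∑ j : Fin d,
              ((((n * K : ℕ) : ℝ)⁻¹ • ∑ k' : Fin K, ∑ i' : Fin n, s k' i') j
                - s k i j) ^ 2)
        ∂(Measure.pi fun _ : Fin K => (Measure.pi fun _ : Fin n =>
          (Measure.pi fun j : Fin d => gaussianReal (μ0 j) (σ ^ 2))))
      ≤ (σ : ℝ) ^ 2 * d *
        Real.sqrt (2 * (1 + 1 / (n * K : ℝ)) ^ 2 *
          Real.log ((n * K : ℝ) / ((n * K : ℝ) - 1))) :=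
  gaussian_mean_estimation_end_to_end_bound_general d n K hnK μ0 σ
end
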